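/- arXiv:2512.10380 — 3 statements merged into one kernel-verified Lean document; each statement's English description precedes it below -/
import Mathlib

section
/- Let d ≥ 2, M ≥ 2 and N be positive integers and x a real parameter with d/M² < x ≤ min{d²/M², d/M}. For any (N,M) POVM {E_{α,k}} on C^d with parameter x and any density matrix ρ on C^d, the probabilities p_{α,k} = tr(E_{α,k} ρ) satisfy Σ_{α=1}^{N} Σ_{k=1}^{M} p_{α,k}² ≤ (d−1)(x M² + d²)/(d M (M−1)). -/
open Matrix
open scoped BigOperators ComplexOrder

noncomputable section

/-- A density matrix on `ℂ^d`: positive semidefinite with trace 1. -/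
def IsDensityMatrix {d : ℕ} (ρ : Matrix (Fin d) (Fin d) ℂ) : Prop :=
  ρ.PosSemidef ∧ ρ.trace = 1

/-- An `(N,M)` POVM on `ℂ^d` with parameter `x`. -/
def IsNMPOVM (d N M : ℕ) (x : ℝ)
    (E : Fin N → Fin M → Matrix (Fin d) (Fin d) ℂ) : Prop :=
  (∀ α k, (E α k).PosSemidef) ∧
  (∀ α, ∑ k, E α k = 1) ∧
  (∀ α k, (E α k).trace = (d : ℂ) / (M : ℂ)) ∧
  (∀ α k, (E α k * E α k).trace = (x : ℂ)) ∧
  (∀ α k l, k ≠ l →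
    (E α k * E α l).trace = ((((d : ℝ) - M * x) / (M * ((M : ℝ) - 1)) : ℝ) : ℂ)) ∧
  (∀ α β k l, α ≠ β → (E α k * E β l).trace = (d : ℂ) / ((M : ℂ) ^ 2)) ∧
  ((d : ℝ) / (M : ℝ) ^ 2 < x ∧ x ≤ min ((d : ℝ) ^ 2 / (M : ℝ) ^ 2) ((d : ℝ) / (M : ℝ)))

lemma trace_ct_self {d : ℕ} (H : Matrix (Fin d) (Fin d) ℂ) :
    ((Hᴴ * H).trace) = ((∑ i, ∑ j, Complex.normSq (H j i) : ℝ) : ℂ) := by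
  simp only [Matrix.trace, Matrix.diag, Matrix.mul_apply, Matrix.conjTranspose_apply]
  push_cast
  congr 1; ext i; congr 1; ext j
  rw [Complex.star_def, ← Complex.normSq_eq_conj_mul_self]

lemma trace_sq_re_nonneg {d : ℕ} {H : Matrix (Fin d) (Fin d) ℂ} (hH : H.IsHermitian) :
    0 ≤ ((H * H).trace).re := by
  nth_rewrite 1 [← hH.eq]
  rw [trace_ct_self]
  simp only [Complex.ofReal_re]
  exact Finset.sum_nonneg fun i _ => Finset.sum_nonneg fun j _ => Complex.normSq_nonneg _

lemma trace_mul_std {d : ℕ} (B : Matrix (Fin d) (Fin d) ℂ) (i j : Fin d) :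
    (B * Matrix.single i j (1:ℂ)).trace = B j i := by
  simp [Matrix.trace, Matrix.diag, Matrix.mul_apply, Matrix.single, ite_and]

lemma std_ct {d : ℕ} (i j : Fin d) :
    (Matrix.single i j (1:ℂ))ᴴ = Matrix.single j i (1:ℂ) := by
  ext a b
  simp [Matrix.conjTranspose_apply, Matrix.single, apply_ite, and_comm]

lemma trace_std {d : ℕ} (i j : Fin d) :
    (Matrix.single i j (1:ℂ)).trace = if i = j then 1 else 0 := by
  by_cases h : i = j
  · subst h
    simp [Matrix.trace, Matrix.diag, Matrix.single]
  · rw [if_neg h]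
    refine Finset.sum_eq_zero fun k _ => ?_
    simp only [Matrix.diag]
    rw [Matrix.single_apply_of_ne]
    rintro ⟨rfl, rfl⟩
    exact h rfl

lemma density_trace_sq {d : ℕ} (ρ : Matrix (Fin d) (Fin d) ℂ)
    (h1 : ρ.PosSemidef) (h2 : ρ.trace = 1) : ((ρ * ρ).trace).re ≤ 1 := by
  have hherm := h1.1
  set U : Matrix (Fin d) (Fin d) ℂ := (hherm.eigenvectorUnitary : Matrix (Fin d) (Fin d) ℂ) with hU
  set D : Matrix (Fin d) (Fin d) ℂ := diagonal (RCLike.ofReal ∘ hherm.eigenvalues) with hD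
  have hsp : ρ = U * D * star U := hherm.spectral_theorem
  have hsU : star U * U = 1 := by
    rw [hU]; exact Unitary.coe_star_mul_self _
  have htrD : ∀ (B : Matrix (Fin d) (Fin d) ℂ), (U * B * star U).trace = B.trace := by
    intro B
    rw [Matrix.trace_mul_cycle, hsU, Matrix.one_mul]
  have hρ2 : ρ * ρ = U * (D * D) * star U := by
    rw [hsp]
    simp only [Matrix.mul_assoc]
    rw [show star U * (U * (D * star U)) = D * star U from by
      rw [← Matrix.mul_assoc, hsU, Matrix.one_mul]]
  have hDD : (D * D).trace = ((∑ i, hherm.eigenvalues i ^ 2 : ℝ) : ℂ) := by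
    rw [hD, Matrix.diagonal_mul_diagonal, Matrix.trace_diagonal]
    push_cast; simp [pow_two]
  have hDtr : D.trace = ((∑ i, hherm.eigenvalues i : ℝ) : ℂ) := by
    rw [hD, Matrix.trace_diagonal]; push_cast; simp
  have hsum : (∑ i, hherm.eigenvalues i : ℝ) = 1 := by
    have := htrD D
    rw [← hsp, h2, hDtr] at this
    exact_mod_cast this.symm
  have hnn : ∀ i, 0 ≤ hherm.eigenvalues i := h1.eigenvalues_nonneg
  have htr2 : ((ρ * ρ).trace).re = ∑ i, hherm.eigenvalues i ^ 2 := by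
    rw [hρ2, htrD, hDD, Complex.ofReal_re]
  rw [htr2]
  calc ∑ i, hherm.eigenvalues i ^ 2 ≤ (∑ i, hherm.eigenvalues i) ^ 2 :=
        Finset.sum_sq_le_sq_sum_of_nonneg (fun i _ => hnn i)
    _ = 1 := by rw [hsum]; norm_num

lemma povm_entry_sum {d N M : ℕ} (x : ℝ)
    (E : Fin N → Fin M → Matrix (Fin d) (Fin d) ℂ) (hE : IsNMPOVM d N M x E)
    (α : Fin N) (k : Fin M) :
    (∑ i, ∑ j, Complex.normSq
      (E α k i j - (if i = j then ((((M:ℝ))⁻¹ : ℝ) : ℂ) else 0)))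
      = x - (d:ℝ)/(M:ℝ)^2 := by
  obtain ⟨hpsd, hsum, htr, htr2, htrkl, htrab, hxx⟩ := hE
  set Q : Matrix (Fin d) (Fin d) ℂ :=
    E α k - ((((M:ℝ))⁻¹ : ℝ) : ℂ) • (1 : Matrix (Fin d) (Fin d) ℂ) with hQ
  have hQherm : Q.IsHermitian := by
    refine ((hpsd α k).1).sub ?_
    show _ᴴ = _
    rw [Matrix.conjTranspose_smul, Matrix.conjTranspose_one, Complex.star_def,
      Complex.conj_ofReal]
  have hQQ : (Q * Q).trace = (((x - (d:ℝ)/(M:ℝ)^2 : ℝ)) : ℂ) := by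
    rw [hQ]
    simp only [Matrix.sub_mul, Matrix.mul_sub, Matrix.trace_sub, smul_mul_assoc,
      mul_smul_comm, Matrix.one_mul, Matrix.mul_one, Matrix.trace_smul, smul_smul,
      Matrix.trace_one, smul_eq_mul, htr, htr2, Fintype.card_fin]
    push_cast
    field_simp
    ring
  have hct := trace_ct_self Q
  rw [hQherm.eq, hQQ] at hct
  have hswap : (∑ i, ∑ j, Complex.normSq (Q j i)) = ∑ i, ∑ j, Complex.normSq (Q i j) :=
    Finset.sum_comm
  have hval : (x - (d:ℝ)/(M:ℝ)^2) = ∑ i, ∑ j, Complex.normSq (Q i j) := by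
    rw [← hswap]
    exact_mod_cast hct
  rw [hval]
  refine Finset.sum_congr rfl fun i _ => Finset.sum_congr rfl fun j _ => ?_
  congr 1
  rw [hQ]
  simp only [Matrix.sub_apply, Matrix.smul_apply, Matrix.one_apply, smul_eq_mul,
    mul_ite, mul_one, mul_zero]

lemma sum_swap4 {A B C D : Type*} [Fintype A] [Fintype B] [Fintype C] [Fintype D]
    (f : A → B → C → D → ℝ) :
    ∑ i : A, ∑ j : B, ∑ α : C, ∑ k : D, f i j α k
      = ∑ α : C, ∑ k : D, ∑ i : A, ∑ j : B, f i j α k := by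
  have h1 : ∀ (g : C → D → ℝ), ∑ q : C × D, g q.1 q.2 = ∑ α, ∑ k, g α k :=
    fun g => Fintype.sum_prod_type (f := fun q : C × D => g q.1 q.2)
  have h2 : ∀ (g : A → B → ℝ), ∑ p : A × B, g p.1 p.2 = ∑ i, ∑ j, g i j :=
    fun g => Fintype.sum_prod_type (f := fun p : A × B => g p.1 p.2)
  calc ∑ i : A, ∑ j : B, ∑ α : C, ∑ k : D, f i j α k
      = ∑ p : A × B, ∑ q : C × D, f p.1 p.2 q.1 q.2 := by
        rw [← h2 (fun i j => ∑ α, ∑ k, f i j α k)]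
        exact Finset.sum_congr rfl fun p _ => (h1 _).symm
    _ = ∑ q : C × D, ∑ p : A × B, f p.1 p.2 q.1 q.2 := Finset.sum_comm
    _ = ∑ α : C, ∑ k : D, ∑ i : A, ∑ j : B, f i j α k := by
        rw [← h1 (fun α k => ∑ i, ∑ j, f i j α k)]
        exact Finset.sum_congr rfl fun q _ => h2 fun i j => f i j q.1 q.2

lemma frame_bound {d N M : ℕ} (hd : 2 ≤ d) (hM : 2 ≤ M)
    (x : ℝ) (E : Fin N → Fin M → Matrix (Fin d) (Fin d) ℂ) (hE : IsNMPOVM d N M x E)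
    (A : Matrix (Fin d) (Fin d) ℂ) (hA : A.IsHermitian) :
    ∑ α : Fin N, ∑ k : Fin M, ((E α k * A).trace.re - A.trace.re / (M : ℝ))^2
      ≤ (x - (d : ℝ)/(M:ℝ)^2) * (M : ℝ) / ((M:ℝ)-1)
        * (((A*A).trace).re - (A.trace.re)^2/(d : ℝ)) := by
  obtain ⟨hpsd, hsum, htr, htr2, htrkl, htrab, hxx⟩ := hE
  have hMR : (2:ℝ) ≤ (M:ℝ) := by exact_mod_cast hM
  have hM0 : (0:ℝ) < (M:ℝ) := by linarith
  have hM1 : (0:ℝ) < (M:ℝ) - 1 := by linarith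
  have hdR : (2:ℝ) ≤ (d:ℝ) := by exact_mod_cast hd
  have hd0 : (0:ℝ) < (d:ℝ) := by linarith
  set a : ℝ := x - (d:ℝ)/(M:ℝ)^2 with ha
  have hapos : 0 < a := by have := hxx.1; simp only [ha]; linarith
  set lam : ℝ := a * (M:ℝ) / ((M:ℝ)-1) with hlam
  have hlampos : 0 < lam := by positivity
  -- the shifted operators
  set Q : Fin N → Fin M → Matrix (Fin d) (Fin d) ℂ :=
    fun α k => E α k - ((((M:ℝ))⁻¹ : ℝ) : ℂ) • (1 : Matrix (Fin d) (Fin d) ℂ) with hQ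
  have hQherm : ∀ α k, (Q α k).IsHermitian := by
    intro α k
    refine ((hpsd α k).1).sub ?_
    show _ᴴ = _
    rw [Matrix.conjTranspose_smul, Matrix.conjTranspose_one, Complex.star_def,
      Complex.conj_ofReal]
  have hQtr : ∀ α k, (Q α k).trace = 0 := by
    intro α k
    rw [hQ]
    simp only [Matrix.trace_sub, Matrix.trace_smul, Matrix.trace_one, htr, Fintype.card_fin]
    rw [smul_eq_mul]
    push_cast
    field_simp
    ring
  have hQmulB : ∀ (B : Matrix (Fin d) (Fin d) ℂ) α k,
      ((Q α k) * B).trace = (E α k * B).trace - ((((M:ℝ))⁻¹ : ℝ) : ℂ) * B.trace := by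
    intro B α k
    rw [hQ]
    simp only [Matrix.sub_mul, Matrix.trace_sub, smul_mul_assoc, Matrix.one_mul,
      Matrix.trace_smul, smul_eq_mul]
  -- Gram matrix entries
  have hgram : ∀ α β k l, ((Q α k * Q β l).trace)
      = (E α k * E β l).trace - (((d:ℝ)/(M:ℝ)^2 : ℝ) : ℂ) := by
    intro α β k l
    rw [hQ]
    simp only [Matrix.sub_mul, Matrix.mul_sub, Matrix.trace_sub, smul_mul_assoc,
      mul_smul_comm, Matrix.one_mul, Matrix.mul_one, Matrix.trace_smul, smul_smul,
      Matrix.trace_one, smul_eq_mul, htr, Fintype.card_fin]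
    push_cast
    field_simp
    ring
  have g1 : ∀ α k, ((Q α k * Q α k).trace).re = a := by
    intro α k
    rw [hgram, htr2, ← Complex.ofReal_sub, Complex.ofReal_re, ha]
  have g2 : ∀ α k l, k ≠ l → ((Q α k * Q α l).trace).re = -a/((M:ℝ)-1) := by
    intro α k l hkl
    rw [hgram, htrkl α k l hkl, ← Complex.ofReal_sub, Complex.ofReal_re, ha]
    field_simp
    ring
  have g3 : ∀ α β k l, α ≠ β → ((Q α k * Q β l).trace).re = 0 := by
    intro α β k l hab
    rw [hgram, htrab α β k l hab]
    have : ((d:ℂ)/(M:ℂ)^2) = (((d:ℝ)/(M:ℝ)^2 : ℝ) : ℂ) := by push_cast; ring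
    rw [this, sub_self]
    simp
  -- coefficients
  set c : Fin N → Fin M → ℝ :=
    fun α k => (E α k * A).trace.re - A.trace.re / (M:ℝ) with hc
  set S : ℝ := ∑ α, ∑ k, (c α k)^2 with hS
  have hSnn : 0 ≤ S :=
    Finset.sum_nonneg fun α _ => Finset.sum_nonneg fun k _ => sq_nonneg _
  have hcQ : ∀ α k, ((Q α k * A).trace).re = c α k := by
    intro α k
    rw [hQmulB A α k]
    simp only [Complex.sub_re, Complex.mul_re, Complex.ofReal_re, Complex.ofReal_im,
      zero_mul, sub_zero, hc]
    field_simp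
  -- the combined operator W
  set W : Matrix (Fin d) (Fin d) ℂ :=
    ∑ α, ∑ k, ((c α k : ℝ) : ℂ) • Q α k with hW
  have hWherm : W.IsHermitian := by
    show Wᴴ = W
    rw [hW, Matrix.conjTranspose_sum]
    refine Finset.sum_congr rfl fun α _ => ?_
    rw [Matrix.conjTranspose_sum]
    refine Finset.sum_congr rfl fun k _ => ?_
    rw [Matrix.conjTranspose_smul, Complex.star_def, Complex.conj_ofReal, (hQherm α k).eq]
  have hWtr : W.trace = 0 := by
    rw [hW]
    simp only [Matrix.trace_sum, Matrix.trace_smul, hQtr, smul_zero, Finset.sum_const_zero]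
  have hWA : ((W * A).trace).re = S := by
    rw [hW]
    simp only [Finset.sum_mul, smul_mul_assoc, Matrix.trace_sum, Matrix.trace_smul,
      smul_eq_mul, Complex.re_sum, Complex.mul_re, Complex.ofReal_re, Complex.ofReal_im,
      zero_mul, sub_zero, hcQ, hS]
    refine Finset.sum_congr rfl fun α _ => Finset.sum_congr rfl fun k _ => ?_
    ring
  have hWWre : ((W * W).trace).re
      = ∑ α, ∑ k, ∑ β, ∑ l, c α k * c β l * ((Q α k * Q β l).trace).re := by
    rw [hW]
    simp only [Finset.sum_mul, Finset.mul_sum, smul_mul_assoc, mul_smul_comm,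
      Matrix.trace_sum, Matrix.trace_smul, smul_eq_mul, Complex.re_sum]
    refine Finset.sum_congr rfl fun α _ => Finset.sum_congr rfl fun k _ =>
      Finset.sum_congr rfl fun β _ => Finset.sum_congr rfl fun l _ => ?_
    simp only [Complex.mul_re, Complex.ofReal_re, Complex.ofReal_im, zero_mul, sub_zero]
    rw [Matrix.trace_mul_comm (Q β l) (Q α k)]
    ring
  have hsq : ∀ (f : Fin M → ℝ) (t : ℝ), ∑ k, ∑ l, f k * f l * t = (∑ k, f k)^2 * t := by
    intro f t
    rw [sq, Finset.sum_mul_sum, Finset.sum_mul]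
    all_goals try (refine Finset.sum_congr rfl fun k _ => ?_ ; rw [Finset.sum_mul])
  have hinner : ∀ α, ∑ k, ∑ l, c α k * c α l * ((Q α k * Q α l).trace).re
      = lam * (∑ k, (c α k)^2) - a/((M:ℝ)-1) * (∑ k, c α k)^2 := by
    intro α
    have hg : ∀ k l : Fin M, ((Q α k * Q α l).trace).re
        = -a/((M:ℝ)-1) + (if k = l then a*(M:ℝ)/((M:ℝ)-1) else 0) := by
      intro k l
      by_cases h : k = l
      · subst h
        rw [g1, if_pos rfl]
        field_simp
        ring
      · rw [g2 α k l h, if_neg h, add_zero]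
    simp_rw [hg, mul_add, Finset.sum_add_distrib, mul_ite, mul_zero,
      Finset.sum_ite_eq, Finset.mem_univ, if_true]
    rw [hsq (c α) (-a/((M:ℝ)-1))]
    have : ∑ k, c α k * c α k * (a*(M:ℝ)/((M:ℝ)-1)) = lam * ∑ k, (c α k)^2 := by
      rw [Finset.mul_sum]
      exact Finset.sum_congr rfl fun k _ => by rw [hlam]; ring
    rw [this]
    ring
  have hWW : ((W * W).trace).re ≤ lam * S := by
    rw [hWWre]
    have : ∀ α ∈ Finset.univ, (∑ k, ∑ β, ∑ l, c α k * c β l * ((Q α k * Q β l).trace).re)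
        ≤ lam * ∑ k, (c α k)^2 := by
      intro α _
      have hcollapse : ∀ k, ∑ β, ∑ l, c α k * c β l * ((Q α k * Q β l).trace).re
          = ∑ l, c α k * c α l * ((Q α k * Q α l).trace).re := by
        intro k
        refine Finset.sum_eq_single_of_mem α (Finset.mem_univ α) ?_
        intro β _ hβ
        refine Finset.sum_eq_zero fun l _ => ?_
        rw [g3 α β k l (Ne.symm hβ), mul_zero]
      simp_rw [hcollapse]
      rw [hinner α]
      have : 0 ≤ a/((M:ℝ)-1) * (∑ k, c α k)^2 := by positivity
      linarith
    calc _ ≤ ∑ α, lam * ∑ k, (c α k)^2 := Finset.sum_le_sum this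
      _ = lam * S := by rw [hS, Finset.mul_sum]
  -- traceless part of A
  set τ : ℝ := A.trace.re with hτ
  set A0 : Matrix (Fin d) (Fin d) ℂ := A - (((τ/(d:ℝ) : ℝ)) : ℂ) • 1 with hA0
  have hA0herm : A0.IsHermitian := by
    refine hA.sub ?_
    show _ᴴ = _
    rw [Matrix.conjTranspose_smul, Matrix.conjTranspose_one, Complex.star_def,
      Complex.conj_ofReal]
  set NA : ℝ := ((A*A).trace).re - τ^2/(d:ℝ) with hNA
  have hA0sq : ((A0 * A0).trace).re = NA := by
    rw [hA0]
    simp only [Matrix.sub_mul, Matrix.mul_sub, Matrix.trace_sub, smul_mul_assoc,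
      mul_smul_comm, Matrix.one_mul, Matrix.mul_one, Matrix.trace_smul, smul_smul,
      Matrix.trace_one, smul_eq_mul, Fintype.card_fin]
    simp only [Complex.sub_re, Complex.mul_re, Complex.ofReal_re, Complex.ofReal_im,
      zero_mul, sub_zero, Complex.natCast_re, Complex.natCast_im, mul_zero]
    rw [hNA, ← hτ]
    field_simp
    ring
  have hNAnn : 0 ≤ NA := hA0sq ▸ trace_sq_re_nonneg hA0herm
  have hWA0 : ((W * A0).trace).re = S := by
    rw [hA0]
    simp only [Matrix.mul_sub, Matrix.trace_sub, mul_smul_comm, Matrix.mul_one,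
      Matrix.trace_smul, smul_eq_mul, hWtr, mul_zero, sub_zero, hWA]
  -- Cauchy–Schwarz via the discriminant
  set b : ℝ := ((W * W).trace).re with hb
  have hquad : ∀ t : ℝ, 0 ≤ b * (t*t) + (-2*S) * t + NA := by
    intro t
    have hHherm : ((t:ℂ) • W - A0).IsHermitian := by
      refine Matrix.IsHermitian.sub ?_ hA0herm
      show _ᴴ = _
      rw [Matrix.conjTranspose_smul, Complex.star_def, Complex.conj_ofReal, hWherm.eq]
    have h0 := trace_sq_re_nonneg hHherm
    have hexp : (((t:ℂ) • W - A0) * ((t:ℂ) • W - A0)).trace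
        = (t:ℂ)*(t:ℂ)*(W*W).trace - (t:ℂ)*(W*A0).trace - (t:ℂ)*(A0*W).trace
          + (A0*A0).trace := by
      simp only [Matrix.sub_mul, Matrix.mul_sub, Matrix.trace_sub, Matrix.trace_add,
        smul_mul_assoc, mul_smul_comm, Matrix.trace_smul, smul_smul, smul_eq_mul]
      ring
    rw [hexp] at h0
    have hA0W : ((A0 * W).trace) = ((W * A0).trace) := Matrix.trace_mul_comm _ _
    rw [hA0W] at h0
    simp only [Complex.add_re, Complex.sub_re, Complex.mul_re, Complex.ofReal_re,
      Complex.ofReal_im, zero_mul, sub_zero, mul_zero, Complex.mul_im, add_zero,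
      zero_add] at h0
    rw [hWA0, hA0sq] at h0
    rw [hb]
    linarith [h0]
  have hdisc := discrim_le_zero hquad
  have hdisc' : 4*(S*S) - 4*(b*NA) ≤ 0 := by
    have e : discrim b (-2*S) NA = 4*(S*S) - 4*(b*NA) := by rw [discrim]; ring
    rw [e] at hdisc
    exact hdisc
  have hCS : S * S ≤ b * NA := by linarith
  -- conclude
  have hgoal : S ≤ lam * NA := by
    rcases eq_or_lt_of_le hSnn with hS0 | hSpos
    · rw [← hS0]
      positivity
    · have h1 : b * NA ≤ (lam * S) * NA := mul_le_mul_of_nonneg_right hWW hNAnn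
      have h2 : S * S ≤ (lam * NA) * S := by nlinarith [hCS, h1]
      exact le_of_mul_le_mul_right h2 hSpos
  calc ∑ α : Fin N, ∑ k : Fin M, ((E α k * A).trace.re - A.trace.re / (M : ℝ))^2
      = S := by rw [hS]
    _ ≤ lam * NA := hgoal
    _ = (x - (d : ℝ)/(M:ℝ)^2) * (M : ℝ) / ((M:ℝ)-1)
        * (((A*A).trace).re - (A.trace.re)^2/(d : ℝ)) := by rw [hlam, hNA, ha, hτ]

/-- For any `(N,M)` POVM and any density matrix `ρ`, the probabilities
`p_{α,k} = tr(E_{α,k} ρ)` satisfy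
`Σ p_{α,k}² ≤ (d−1)(x M² + d²)/(d M (M−1))`. -/
theorem sum_sq_probabilities_le {d N M : ℕ} (hd : 2 ≤ d) (hM : 2 ≤ M) (hN : 0 < N)
    (x : ℝ)
    (hx : (d : ℝ) / (M : ℝ) ^ 2 < x ∧
      x ≤ min ((d : ℝ) ^ 2 / (M : ℝ) ^ 2) ((d : ℝ) / (M : ℝ)))
    (E : Fin N → Fin M → Matrix (Fin d) (Fin d) ℂ)
    (hE : IsNMPOVM d N M x E)
    (ρ : Matrix (Fin d) (Fin d) ℂ) (hρ : IsDensityMatrix ρ) :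
    ∑ α : Fin N, ∑ k : Fin M, ((E α k * ρ).trace.re) ^ 2 ≤
      ((d : ℝ) - 1) * (x * (M : ℝ) ^ 2 + (d : ℝ) ^ 2) /
        ((d : ℝ) * (M : ℝ) * ((M : ℝ) - 1)) := by
  have hMR : (2:ℝ) ≤ (M:ℝ) := by exact_mod_cast hM
  have hM0 : (0:ℝ) < (M:ℝ) := by linarith
  have hM1 : (0:ℝ) < (M:ℝ) - 1 := by linarith
  have hdR : (2:ℝ) ≤ (d:ℝ) := by exact_mod_cast hd
  have hd0 : (0:ℝ) < (d:ℝ) := by linarith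
  have hapos : (0:ℝ) < x - (d:ℝ)/(M:ℝ)^2 := by linarith [hx.1]
  set lam : ℝ := (x - (d:ℝ)/(M:ℝ)^2) * (M:ℝ) / ((M:ℝ)-1) with hlam
  have hlampos : 0 < lam := by positivity
  -- Part A : frame bound applied to ρ
  have hframeρ := frame_bound hd hM x E hE ρ hρ.1.1
  rw [hρ.2] at hframeρ
  simp only [Complex.one_re] at hframeρ
  have hρ2 : ((ρ*ρ).trace).re ≤ 1 := density_trace_sq ρ hρ.1 hρ.2
  have hA' : ∑ α : Fin N, ∑ k : Fin M, ((E α k * ρ).trace.re - 1/(M:ℝ))^2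
      ≤ lam * (1 - 1/(d:ℝ)) := by
    refine hframeρ.trans ?_
    rw [hlam]
    have h1 : ((ρ*ρ).trace).re - 1^2/(d:ℝ) ≤ 1 - 1/(d:ℝ) := by
      rw [one_pow]; linarith
    exact mul_le_mul_of_nonneg_left h1 (le_of_lt hlampos)
  -- sum of probabilities in each α equals 1
  have hp1 : ∀ α, ∑ k, (E α k * ρ).trace.re = 1 := by
    intro α
    have h1 : (∑ k, (E α k * ρ).trace) = (1:ℂ) := by
      rw [← Matrix.trace_sum, ← Finset.sum_mul, hE.2.1 α, Matrix.one_mul, hρ.2]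
    calc ∑ k, (E α k * ρ).trace.re = (∑ k, (E α k * ρ).trace).re :=
          (Complex.re_sum _ _).symm
      _ = 1 := by rw [h1, Complex.one_re]
  -- split the sum of squares
  have hsplit : ∑ α : Fin N, ∑ k : Fin M, ((E α k * ρ).trace.re)^2
      = (∑ α : Fin N, ∑ k : Fin M, ((E α k * ρ).trace.re - 1/(M:ℝ))^2) + (N:ℝ)/(M:ℝ) := by
    have hα : ∀ α, ∑ k, ((E α k * ρ).trace.re)^2
        = (∑ k, ((E α k * ρ).trace.re - 1/(M:ℝ))^2) + 1/(M:ℝ) := by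
      intro α
      have expand : ∑ k, ((E α k * ρ).trace.re)^2
          = ∑ k, (((E α k * ρ).trace.re - 1/(M:ℝ))^2
              + (2/(M:ℝ)) * (E α k * ρ).trace.re - 1/(M:ℝ)^2) := by
        exact Finset.sum_congr rfl fun k _ => by ring
      rw [expand]
      rw [Finset.sum_sub_distrib, Finset.sum_add_distrib, ← Finset.mul_sum, hp1 α]
      simp only [Finset.sum_const, Finset.card_univ, Fintype.card_fin, nsmul_eq_mul]
      field_simp
      ring_nf
      simp only [mul_comm, mul_left_comm, mul_assoc]
    rw [Finset.sum_congr rfl fun α _ => hα α, Finset.sum_add_distrib]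
    simp only [Finset.sum_const, Finset.card_univ, Fintype.card_fin, nsmul_eq_mul]
    ring
  -- Part B : the counting bound N (M-1) ≤ d² - 1
  have hpart : ∀ i j : Fin d,
      (∑ α : Fin N, ∑ k : Fin M, 4 * Complex.normSq
        (E α k i j - (if i = j then ((((M:ℝ))⁻¹ : ℝ) : ℂ) else 0)))
      ≤ lam * (4 - 4*(if i = j then (1:ℝ) else 0)/(d:ℝ)) := by
    intro i j
    set Z : Matrix (Fin d) (Fin d) ℂ := Matrix.single i j (1:ℂ) with hZ
    set Z' : Matrix (Fin d) (Fin d) ℂ := Matrix.single j i (1:ℂ) with hZ'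
    set Sm : Matrix (Fin d) (Fin d) ℂ := Z + Z' with hSm
    set Tm : Matrix (Fin d) (Fin d) ℂ := Complex.I • (Z - Z') with hTm
    have hermS : Sm.IsHermitian := by
      show _ᴴ = _
      rw [hSm, Matrix.conjTranspose_add, hZ, hZ', std_ct, std_ct, add_comm]
    have hermT : Tm.IsHermitian := by
      show _ᴴ = _
      rw [hTm, Matrix.conjTranspose_smul, Matrix.conjTranspose_sub, hZ, hZ',
        std_ct, std_ct, Complex.star_def, Complex.conj_I]
      rw [show (Matrix.single j i (1:ℂ)) - (Matrix.single i j (1:ℂ))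
          = -(Z - Z') from by rw [hZ, hZ', neg_sub]]
      rw [smul_neg, neg_smul, neg_neg]
    have hfS := frame_bound hd hM x E hE Sm hermS
    have hfT := frame_bound hd hM x E hE Tm hermT
    -- trace computations for Sm
    have hermE : ∀ α k, star (E α k i j) = E α k j i := fun α k => ((hE.1 α k).1).apply j i
    have hre1 : ∀ α (k : Fin M), ((E α k * Sm).trace).re = 2*(E α k i j).re := by
      intro α k
      rw [hSm, Matrix.mul_add, Matrix.trace_add, hZ, hZ', trace_mul_std, trace_mul_std]
      rw [← hermE α k]
      simp only [Complex.add_re, Complex.star_def, Complex.conj_re]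
      ring
    have hre2 : (Sm.trace).re = (if i = j then (2:ℝ) else 0) := by
      rw [hSm, Matrix.trace_add, hZ, hZ', trace_std, trace_std]
      by_cases h : i = j
      · have h' : j = i := h.symm
        rw [if_pos h, if_pos h', if_pos h]
        norm_num
      · have h' : ¬ j = i := fun e => h e.symm
        rw [if_neg h, if_neg h', if_neg h]
        norm_num
    have hentry : ∀ a b u v : Fin d, (Matrix.single a b (1:ℂ)) u v
        = if a = u ∧ b = v then 1 else 0 := by
      intro a b u v
      by_cases h : a = u ∧ b = v
      · obtain ⟨h1, h2⟩ := h
        subst h1; subst h2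
        rw [if_pos ⟨rfl, rfl⟩, Matrix.single_apply_same]
      · simp only [Matrix.single_apply_of_ne _ _ _ _ _ h, if_neg h]
    have hre3 : ((Sm*Sm).trace).re = 2 + 2*(if i = j then (1:ℝ) else 0) := by
      have e1 : (Sm*Sm).trace = Sm j i + Sm i j := by
        nth_rewrite 1 [hSm]
        rw [Matrix.mul_add, Matrix.trace_add, hZ, hZ', trace_mul_std, trace_mul_std]
      rw [e1, hSm, hZ, hZ', Matrix.add_apply, Matrix.add_apply,
        hentry i j j i, hentry j i j i, hentry i j i j, hentry j i i j]
      by_cases h : i = j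
      · have h' : j = i := h.symm
        rw [if_pos (⟨h, h'⟩ : i = j ∧ j = i), if_pos (⟨h', h⟩ : j = i ∧ i = j),
          if_pos (⟨rfl, rfl⟩ : j = j ∧ i = i), if_pos (⟨rfl, rfl⟩ : i = i ∧ j = j), if_pos h]
        norm_num
      · have h' : ¬ j = i := fun e => h e.symm
        rw [if_pos (⟨rfl, rfl⟩ : j = j ∧ i = i), if_pos (⟨rfl, rfl⟩ : i = i ∧ j = j),
          if_neg (fun c => h c.1 : ¬(i = j ∧ j = i)),
          if_neg (fun c => h' c.1 : ¬(j = i ∧ i = j)), if_neg h]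
        norm_num
    have hreT1 : ∀ α (k : Fin M), ((E α k * Tm).trace).re = 2*(E α k i j).im := by
      intro α k
      have e : (E α k * Tm).trace = Complex.I * ((E α k) j i - (E α k) i j) := by
        rw [hTm, mul_smul_comm, Matrix.trace_smul, Matrix.mul_sub, Matrix.trace_sub,
          hZ, hZ', trace_mul_std, trace_mul_std, smul_eq_mul]
      rw [e, ← hermE α k]
      simp only [Complex.mul_re, Complex.I_re, Complex.I_im, Complex.sub_im,
        Complex.star_def, Complex.conj_im, zero_mul, one_mul]
      ring
    have hreT2 : (Tm.trace).re = 0 := by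
      have e : Tm.trace = Complex.I * ((Z.trace) - (Z'.trace)) := by
        rw [hTm, Matrix.trace_smul, Matrix.trace_sub, smul_eq_mul]
      rw [e, hZ, hZ', trace_std, trace_std]
      by_cases h : i = j
      · have h' : j = i := h.symm
        rw [if_pos h, if_pos h', sub_self, mul_zero, Complex.zero_re]
      · have h' : ¬ j = i := fun e => h e.symm
        rw [if_neg h, if_neg h', sub_self, mul_zero, Complex.zero_re]
    have hreT3 : ((Tm*Tm).trace).re = 2 - 2*(if i = j then (1:ℝ) else 0) := by
      have e0 : Tm * Tm = (Complex.I * Complex.I) • ((Z - Z') * (Z - Z')) := by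
        rw [hTm, smul_mul_assoc, mul_smul_comm, smul_smul]
      have e1 : ((Z - Z') * (Z - Z')).trace = ((Z - Z') j i) - ((Z - Z') i j) := by
        nth_rewrite 1 [show Z - Z' = Z - Z' from rfl]
        rw [Matrix.mul_sub, Matrix.trace_sub]
        nth_rewrite 3 [hZ]
        nth_rewrite 4 [hZ']
        rw [trace_mul_std, trace_mul_std]
      have e2 : (Z - Z') j i = (if i = j ∧ j = i then (1:ℂ) else 0) - 1 := by
        rw [Matrix.sub_apply, hZ, hZ', hentry i j j i, hentry j i j i,
          if_pos (⟨rfl, rfl⟩ : j = j ∧ i = i)]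
      have e3 : (Z - Z') i j = 1 - (if j = i ∧ i = j then (1:ℂ) else 0) := by
        rw [Matrix.sub_apply, hZ, hZ', hentry i j i j, hentry j i i j,
          if_pos (⟨rfl, rfl⟩ : i = i ∧ j = j)]
      rw [e0, Matrix.trace_smul, e1, e2, e3, Complex.I_mul_I, smul_eq_mul]
      by_cases h : i = j
      · have h' : j = i := h.symm
        rw [if_pos (⟨h, h'⟩ : i = j ∧ j = i), if_pos (⟨h', h⟩ : j = i ∧ i = j), if_pos h]
        norm_num
      · have h' : ¬ j = i := fun e => h e.symm
        rw [if_neg (fun c => h c.1 : ¬(i = j ∧ j = i)),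
          if_neg (fun c => h' c.1 : ¬(j = i ∧ i = j)), if_neg h]
        norm_num
    rw [← hlam] at hfS hfT
    simp only [hre1, hre2, hre3] at hfS
    simp only [hreT1, hreT2, hreT3] at hfT
    have hptwise : ∀ α (k : Fin M), 4 * Complex.normSq
        (E α k i j - (if i = j then ((((M:ℝ))⁻¹ : ℝ) : ℂ) else 0))
        = (2*(E α k i j).re - (if i = j then (2:ℝ) else 0)/(M:ℝ))^2
          + (2*(E α k i j).im - 0/(M:ℝ))^2 := by
      intro α k
      by_cases h : i = j
      · rw [if_pos h, if_pos h]
        simp only [Complex.normSq_apply, Complex.sub_re, Complex.sub_im,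
          Complex.ofReal_re, Complex.ofReal_im, sub_zero]
        field_simp
        ring
      · rw [if_neg h, if_neg h]
        simp only [Complex.normSq_apply, Complex.sub_re, Complex.sub_im,
          Complex.zero_re, Complex.zero_im, sub_zero]
        ring
    calc ∑ α : Fin N, ∑ k : Fin M, 4 * Complex.normSq
          (E α k i j - (if i = j then ((((M:ℝ))⁻¹ : ℝ) : ℂ) else 0))
        = (∑ α : Fin N, ∑ k : Fin M,
            (2*(E α k i j).re - (if i = j then (2:ℝ) else 0)/(M:ℝ))^2)
          + ∑ α : Fin N, ∑ k : Fin M, (2*(E α k i j).im - 0/(M:ℝ))^2 := by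
          rw [← Finset.sum_add_distrib]
          refine Finset.sum_congr rfl fun α _ => ?_
          rw [← Finset.sum_add_distrib]
          exact Finset.sum_congr rfl fun k _ => hptwise α k
      _ ≤ lam * (2 + 2*(if i = j then (1:ℝ) else 0) - (if i = j then (2:ℝ) else 0)^2/(d:ℝ))
          + lam * (2 - 2*(if i = j then (1:ℝ) else 0) - 0^2/(d:ℝ)) := add_le_add hfS hfT
      _ = lam * (4 - 4*(if i = j then (1:ℝ) else 0)/(d:ℝ)) := by
          split_ifs with h <;> ring
  -- sum the per-pair bounds
  have hB : (N:ℝ) * (M:ℝ) * (4*(x - (d:ℝ)/(M:ℝ)^2)) ≤ lam * (4*(d:ℝ)^2 - 4) := by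
    have h1 : ∑ i : Fin d, ∑ j : Fin d, (∑ α : Fin N, ∑ k : Fin M, 4 * Complex.normSq
          (E α k i j - (if i = j then ((((M:ℝ))⁻¹ : ℝ) : ℂ) else 0)))
        ≤ ∑ i : Fin d, ∑ j : Fin d, lam * (4 - 4*(if i = j then (1:ℝ) else 0)/(d:ℝ)) :=
      Finset.sum_le_sum fun i _ => Finset.sum_le_sum fun j _ => hpart i j
    rw [sum_swap4 (fun i j α k => 4 * Complex.normSq
      (E α k i j - (if i = j then ((((M:ℝ))⁻¹ : ℝ) : ℂ) else 0)))] at h1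
    have hL : ∑ α : Fin N, ∑ k : Fin M, (∑ i : Fin d, ∑ j : Fin d, 4 * Complex.normSq
          (E α k i j - (if i = j then ((((M:ℝ))⁻¹ : ℝ) : ℂ) else 0)))
        = (N:ℝ) * (M:ℝ) * (4*(x - (d:ℝ)/(M:ℝ)^2)) := by
      have : ∀ α (k : Fin M), (∑ i : Fin d, ∑ j : Fin d, 4 * Complex.normSq
            (E α k i j - (if i = j then ((((M:ℝ))⁻¹ : ℝ) : ℂ) else 0)))
          = 4*(x - (d:ℝ)/(M:ℝ)^2) := by
        intro α k
        rw [show (∑ i : Fin d, ∑ j : Fin d, 4 * Complex.normSq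
            (E α k i j - (if i = j then ((((M:ℝ))⁻¹ : ℝ) : ℂ) else 0)))
          = 4 * ∑ i : Fin d, ∑ j : Fin d, Complex.normSq
            (E α k i j - (if i = j then ((((M:ℝ))⁻¹ : ℝ) : ℂ) else 0)) from by
          rw [Finset.mul_sum]
          exact Finset.sum_congr rfl fun i _ => by rw [Finset.mul_sum]]
        rw [povm_entry_sum x E hE α k]
      simp_rw [this]
      simp only [Finset.sum_const, Finset.card_univ, Fintype.card_fin, nsmul_eq_mul]
      ring
    have hR : ∑ i : Fin d, ∑ j : Fin d, lam * (4 - 4*(if i = j then (1:ℝ) else 0)/(d:ℝ))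
        = lam * (4*(d:ℝ)^2 - 4) := by
      have hrow : ∀ i : Fin d, ∑ j : Fin d, lam * (4 - 4*(if i = j then (1:ℝ) else 0)/(d:ℝ))
          = lam * (4*(d:ℝ) - 4/(d:ℝ)) := by
        intro i
        rw [← Finset.mul_sum]
        congr 1
        have e : ∀ j : Fin d, 4 - 4*(if i = j then (1:ℝ) else 0)/(d:ℝ)
            = 4 - (if i = j then (4/(d:ℝ)) else 0) := by
          intro j; split_ifs <;> ring
        simp_rw [e]
        rw [Finset.sum_sub_distrib, Finset.sum_ite_eq, if_pos (Finset.mem_univ i)]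
        simp only [Finset.sum_const, Finset.card_univ, Fintype.card_fin, nsmul_eq_mul]
        ring
      simp_rw [hrow]
      simp only [Finset.sum_const, Finset.card_univ, Fintype.card_fin, nsmul_eq_mul]
      rw [show ((d:ℝ)) * (lam * (4*(d:ℝ) - 4/(d:ℝ))) = lam * ((d:ℝ)*(4*(d:ℝ) - 4/(d:ℝ))) from
        by ring]
      congr 1
      field_simp
    rw [hL, hR] at h1
    exact h1
  have hNM : (N:ℝ)*((M:ℝ)-1) ≤ (d:ℝ)^2 - 1 := by
    have h2 : (N:ℝ) * (M:ℝ) * (4*(x - (d:ℝ)/(M:ℝ)^2)) * ((M:ℝ)-1)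
        ≤ lam * (4*(d:ℝ)^2 - 4) * ((M:ℝ)-1) := mul_le_mul_of_nonneg_right hB hM1.le
    have h3 : lam * (4*(d:ℝ)^2 - 4) * ((M:ℝ)-1)
        = (x - (d:ℝ)/(M:ℝ)^2) * (M:ℝ) * (4*(d:ℝ)^2 - 4) := by
      rw [hlam]; field_simp
    have h4 : (4*(x - (d:ℝ)/(M:ℝ)^2)*(M:ℝ)) * ((N:ℝ)*((M:ℝ)-1))
        ≤ (4*(x - (d:ℝ)/(M:ℝ)^2)*(M:ℝ)) * ((d:ℝ)^2-1) := by nlinarith [h2, h3]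
    exact le_of_mul_le_mul_left h4 (by positivity)
  -- final arithmetic
  rw [hsplit]
  have final : lam * (1 - 1/(d:ℝ)) + (N:ℝ)/(M:ℝ)
      ≤ ((d : ℝ) - 1) * (x * (M : ℝ) ^ 2 + (d : ℝ) ^ 2) /
        ((d : ℝ) * (M : ℝ) * ((M : ℝ) - 1)) := by
    rw [le_div_iff₀ (by positivity : (0:ℝ) < (d:ℝ)*(M:ℝ)*((M:ℝ)-1))]
    have e1 : lam * (1 - 1/(d:ℝ)) * ((d:ℝ)*(M:ℝ)*((M:ℝ)-1))
        = (x*(M:ℝ)^2 - (d:ℝ))*((d:ℝ)-1) := by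
      rw [hlam]; field_simp
    have e2 : (N:ℝ)/(M:ℝ) * ((d:ℝ)*(M:ℝ)*((M:ℝ)-1)) = ((N:ℝ)*((M:ℝ)-1))*(d:ℝ) := by
      field_simp
    calc (lam * (1 - 1/(d:ℝ)) + (N:ℝ)/(M:ℝ)) * ((d:ℝ)*(M:ℝ)*((M:ℝ)-1))
        = (x*(M:ℝ)^2 - (d:ℝ))*((d:ℝ)-1) + ((N:ℝ)*((M:ℝ)-1))*(d:ℝ) := by
          rw [add_mul, e1, e2]
      _ ≤ (x*(M:ℝ)^2 - (d:ℝ))*((d:ℝ)-1) + ((d:ℝ)^2-1)*(d:ℝ) :=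
          add_le_add_right (mul_le_mul_of_nonneg_right hNM hd0.le) _
      _ = ((d : ℝ) - 1) * (x * (M : ℝ) ^ 2 + (d : ℝ) ^ 2) := by ring
  calc (∑ α : Fin N, ∑ k : Fin M, ((E α k * ρ).trace.re - 1/(M:ℝ))^2) + (N:ℝ)/(M:ℝ)
      ≤ lam * (1 - 1/(d:ℝ)) + (N:ℝ)/(M:ℝ) := add_le_add_left hA' _
    _ ≤ _ := final
end
end

section
/- Let {M^A_α}_{α=1}^{d_A²} be a GSICPOVM on C^{d_A} with parameter a_A and {M^B_β}_{β=1}^{d_B²} a GSICPOVM on C^{d_B} with parameter a_B. If a bipartite density matrix ρ on C^{d_A}⊗C^{d_B} is separable, then for all real numbers μ, ν and every positive integer l, ‖M_{μ,ν}^l(ρ)‖_tr ≤ √( ( l μ² + (a_A d_A² + 1)/(d_A (d_A+1)) ) · ( l ν² + (a_B d_B² + 1)/(d_B (d_B+1)) ) ), where M_{μ,ν}^l(ρ) is the block matrix [[μν J_{l×l}, μ ω_l(ζ)^T], [ν ω_l(ς), G(ρ)]] built from the GSICPOVM probabilities. -/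
open Matrix
open scoped BigOperators ComplexOrder Kronecker

noncomputable section


/-- A GSICPOVM on `ℂ^d` with parameter `a`. -/
def IsGSICPOVM (d : ℕ) (a : ℝ) (Mk : Fin (d ^ 2) → Matrix (Fin d) (Fin d) ℂ) : Prop :=
  (∀ k, (Mk k).PosSemidef) ∧
  (∑ k, Mk k = 1) ∧
  (∀ k, (Mk k).trace = 1 / (d : ℂ)) ∧
  (∀ k, (Mk k * Mk k).trace = (a : ℂ)) ∧
  (∀ k l, k ≠ l →
    (Mk k * Mk l).trace = (((1 - d * a) / (d * ((d : ℝ) ^ 2 - 1)) : ℝ) : ℂ)) ∧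
  (1 / (d : ℝ) ^ 3 < a ∧ a ≤ 1 / (d : ℝ) ^ 2)

/-- Separability of a bipartite density matrix (represented via Kronecker products). -/
def Separable {dA dB : ℕ} (ρ : Matrix (Fin dA × Fin dB) (Fin dA × Fin dB) ℂ) : Prop :=
  ∃ (n : ℕ) (p : Fin n → ℝ) (ρA : Fin n → Matrix (Fin dA) (Fin dA) ℂ)
    (ρB : Fin n → Matrix (Fin dB) (Fin dB) ℂ),
    (∀ i, 0 ≤ p i) ∧ (∑ i, p i = 1) ∧
    (∀ i, IsDensityMatrix (ρA i)) ∧ (∀ i, IsDensityMatrix (ρB i)) ∧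
    ρ = ∑ i, (p i : ℂ) • (ρA i ⊗ₖ ρB i)

/-- The trace norm `‖G‖_tr = tr √(GᴴG)` of a (rectangular) real matrix. -/
def traceNorm {m n : Type*} [Fintype m] [Fintype n] [DecidableEq n]
    (G : Matrix m n ℝ) : ℝ :=
  ((Matrix.posSemidef_conjTranspose_mul_self G).1.eigenvectorUnitary.1 *
    diagonal ((fun x : ℝ => (RCLike.ofReal x : ℝ)) ∘ Real.sqrt ∘ (Matrix.posSemidef_conjTranspose_mul_self G).1.eigenvalues) *
    (star (Matrix.posSemidef_conjTranspose_mul_self G).1.eigenvectorUnitary : Matrix n n ℝ)).trace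

/-- Partial trace over the second factor. -/
def ptraceB {dA dB : ℕ} (ρ : Matrix (Fin dA × Fin dB) (Fin dA × Fin dB) ℂ) :
    Matrix (Fin dA) (Fin dA) ℂ :=
  Matrix.of fun i j => ∑ k : Fin dB, ρ (i, k) (j, k)

/-- Partial trace over the first factor. -/
def ptraceA {dA dB : ℕ} (ρ : Matrix (Fin dA × Fin dB) (Fin dA × Fin dB) ℂ) :
    Matrix (Fin dB) (Fin dB) ℂ :=
  Matrix.of fun i j => ∑ k : Fin dA, ρ (k, i) (k, j)

/-- The block matrix `M_{μ,ν}^l(ρ) = [[μν J, μ ω_l(ζ)ᵀ], [ν ω_l(ς), G(ρ)]]` built from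
the GSICPOVM probabilities. -/
def MMatG {dA dB : ℕ} (l : ℕ)
    (MA : Fin (dA ^ 2) → Matrix (Fin dA) (Fin dA) ℂ)
    (MB : Fin (dB ^ 2) → Matrix (Fin dB) (Fin dB) ℂ)
    (μ ν : ℝ)
    (ρ : Matrix (Fin dA × Fin dB) (Fin dA × Fin dB) ℂ) :
    Matrix (Fin l ⊕ Fin (dA ^ 2)) (Fin l ⊕ Fin (dB ^ 2)) ℝ :=
  Matrix.fromBlocks
    (Matrix.of fun _ _ => μ * ν)
    (Matrix.of fun _ β => μ * ((MB β * ptraceA ρ).trace.re))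
    (Matrix.of fun α _ => ν * ((MA α * ptraceB ρ).trace.re))
    (Matrix.of fun α β => (((MA α ⊗ₖ MB β) * ρ).trace.re))



lemma conj_mulC {p : Type*} [Fintype p] [DecidableEq p] (V : Matrix p p ℂ) (hVV : Vᴴ * V = 1)
    (a b : p → ℂ) :
    (V * diagonal a * Vᴴ) * (V * diagonal b * Vᴴ) = V * diagonal (a * b) * Vᴴ := by
  calc (V * diagonal a * Vᴴ) * (V * diagonal b * Vᴴ)
      = V * (diagonal a * ((Vᴴ * V) * (diagonal b * Vᴴ))) := by simp only [mul_assoc]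
    _ = V * (diagonal a * diagonal b * Vᴴ) := by rw [hVV, one_mul, mul_assoc]
    _ = V * (diagonal (a * b) * Vᴴ) := by rw [diagonal_mul_diagonal]; rfl
    _ = V * diagonal (a * b) * Vᴴ := by rw [Matrix.mul_assoc]

lemma conj_traceC {p : Type*} [Fintype p] [DecidableEq p] (V : Matrix p p ℂ) (hVV : Vᴴ * V = 1)
    (a : p → ℂ) : (V * diagonal a * Vᴴ).trace = ∑ i, a i := by
  rw [trace_mul_cycle, hVV, one_mul, trace_diagonal]

/-- real trace of product of Hermitian matrices -/
lemma trace_mul_isReal {p : Type*} [Fintype p] {A B : Matrix p p ℂ}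
    (hA : A.IsHermitian) (hB : B.IsHermitian) :
    ((A * B).trace : ℂ) = (((A * B).trace.re : ℝ) : ℂ) := by
  have h : (starRingEnd ℂ) ((A * B).trace) = (A * B).trace := by
    rw [← Complex.star_def, ← Matrix.trace_conjTranspose, conjTranspose_mul, hA.eq, hB.eq,
      trace_mul_comm]
  exact ((Complex.conj_eq_iff_re).mp h).symm

lemma trace_conjTranspose_mul_self_re_nonneg {p : Type*} [Fintype p] (X : Matrix p p ℂ) :
    0 ≤ ((Xᴴ * X).trace).re := by
  simp only [trace, diag_apply, mul_apply, conjTranspose_apply, Complex.re_sum]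
  apply Finset.sum_nonneg; intro j _
  apply Finset.sum_nonneg; intro i _
  simpa [Complex.normSq_apply] using Complex.normSq_nonneg (X i j)

/-- Cauchy–Schwarz for the Frobenius inner product of Hermitian matrices. -/
lemma herm_cauchy_schwarz {p : Type*} [Fintype p] {A B : Matrix p p ℂ}
    (hA : A.IsHermitian) (hB : B.IsHermitian) :
    ((A * B).trace.re) ^ 2 ≤ (A * A).trace.re * (B * B).trace.re := by
  have key : ∀ t : ℝ, 0 ≤ (B * B).trace.re * t ^ 2 + (-2 * (A * B).trace.re) * t
      + (A * A).trace.re := by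
    intro t
    have h0 := trace_conjTranspose_mul_self_re_nonneg ((t : ℂ) • B - A)
    have hexp : (((t : ℂ) • B - A)ᴴ * ((t : ℂ) • B - A)).trace
        = (t : ℂ) ^ 2 * (B * B).trace - (t : ℂ) * (B * A).trace
          - (t : ℂ) * (A * B).trace + (A * A).trace := by
      rw [conjTranspose_sub, conjTranspose_smul, hA.eq, hB.eq, sub_mul, mul_sub, mul_sub]
      simp only [smul_mul_assoc, mul_smul_comm, smul_smul, trace_sub, trace_smul,
        smul_eq_mul, Complex.star_def, Complex.conj_ofReal]
      ring
    rw [hexp] at h0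
    rw [trace_mul_comm B A] at h0
    have := congrArg Complex.re (rfl : (((t : ℂ) • B - A)ᴴ * ((t : ℂ) • B - A)).trace
       = (((t : ℂ) • B - A)ᴴ * ((t : ℂ) • B - A)).trace)
    -- compute real part
    simp only [← Complex.ofReal_pow, Complex.add_re, Complex.sub_re, Complex.mul_re,
      Complex.ofReal_re, Complex.ofReal_im] at h0
    nlinarith [h0]
  have key' : ∀ t : ℝ, 0 ≤ (B * B).trace.re * (t * t) + (-2 * (A * B).trace.re) * t
      + (A * A).trace.re := by
    intro t
    have := key t
    nlinarith [this]
  have hd := discrim_le_zero key'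
  unfold discrim at hd
  nlinarith [hd]

lemma trace_sq_le_one {d : ℕ} {ρ : Matrix (Fin d) (Fin d) ℂ} (h : IsDensityMatrix ρ) :
    ((ρ * ρ).trace).re ≤ 1 := by
  have hH := h.1.1
  set V : Matrix (Fin d) (Fin d) ℂ := (hH.eigenvectorUnitary : Matrix (Fin d) (Fin d) ℂ)
    with hVdef
  have hVV : Vᴴ * V = 1 := by
    rw [hVdef, ← star_eq_conjTranspose]
    exact Matrix.mem_unitaryGroup_iff'.mp hH.eigenvectorUnitary.2
  set lam := hH.eigenvalues with hlamdef
  have hspec : ρ = V * diagonal (fun i => ((lam i : ℝ) : ℂ)) * Vᴴ := by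
    have := hH.spectral_theorem
    rw [Unitary.conjStarAlgAut_apply, star_eq_conjTranspose] at this
    exact this
  have h2 : (ρ * ρ).trace = ∑ i, ((lam i : ℂ) * (lam i : ℂ)) := by
    conv_lhs => rw [hspec]
    rw [conj_mulC _ hVV, conj_traceC _ hVV]
    rfl
  have h1 : ρ.trace = ∑ i, (lam i : ℂ) := by
    conv_lhs => rw [hspec]
    rw [conj_traceC _ hVV]
  have hsum : ∑ i, lam i = 1 := by
    have := h.2
    rw [h1] at this
    exact_mod_cast this
  have hnn : ∀ i, 0 ≤ lam i := h.1.eigenvalues_nonneg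
  have h3 : ((ρ * ρ).trace).re = ∑ i, (lam i) ^ 2 := by
    rw [h2]
    simp only [← Complex.ofReal_mul, Complex.re_sum, Complex.ofReal_re, pow_two]
  rw [h3]
  calc ∑ i, (lam i) ^ 2 ≤ (∑ i, lam i) ^ 2 :=
        Finset.sum_sq_le_sq_sum_of_nonneg (fun i _ => hnn i)
    _ = 1 := by rw [hsum]; norm_num


lemma exists_dual_witness {m n : Type*} [Fintype m] [Fintype n] [DecidableEq m] [DecidableEq n]
    (G : Matrix m n ℝ) :
    ∃ W : Matrix m n ℝ, traceNorm G = (Wᴴ * G).trace ∧ (1 - Wᴴ * W).PosSemidef := by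
  set H := Gᴴ * G with hHdef
  have hH : H.PosSemidef := posSemidef_conjTranspose_mul_self G
  set V : Matrix n n ℝ := (hH.1.eigenvectorUnitary : Matrix n n ℝ) with hVdef
  set lam : n → ℝ := hH.1.eigenvalues with hlamdef
  have hlam : ∀ i, 0 ≤ lam i := hH.eigenvalues_nonneg
  have hVV : Vᴴ * V = 1 := by
    rw [hVdef, ← star_eq_conjTranspose]
    exact Matrix.mem_unitaryGroup_iff'.mp hH.1.eigenvectorUnitary.2
  have hVV' : V * Vᴴ = 1 := by
    rw [hVdef, ← star_eq_conjTranspose]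
    exact Matrix.mem_unitaryGroup_iff.mp hH.1.eigenvectorUnitary.2
  have conj_mul : ∀ a b : n → ℝ,
      (V * diagonal a * Vᴴ) * (V * diagonal b * Vᴴ) = V * diagonal (a * b) * Vᴴ := by
    intro a b
    calc (V * diagonal a * Vᴴ) * (V * diagonal b * Vᴴ)
        = V * (diagonal a * ((Vᴴ * V) * (diagonal b * Vᴴ))) := by simp only [mul_assoc]
      _ = V * (diagonal a * diagonal b * Vᴴ) := by rw [hVV, one_mul, mul_assoc]
      _ = V * (diagonal (a * b) * Vᴴ) := by rw [diagonal_mul_diagonal]; rfl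
      _ = V * diagonal (a * b) * Vᴴ := by rw [Matrix.mul_assoc]
  have conj_trace : ∀ a : n → ℝ, (V * diagonal a * Vᴴ).trace = ∑ i, a i := by
    intro a
    rw [trace_mul_cycle, hVV, one_mul, trace_diagonal]
  have hspec : H = V * diagonal lam * Vᴴ := by
    have := hH.1.spectral_theorem
    simpa [hVdef, hlamdef, star_eq_conjTranspose] using this
  classical
  set f : n → ℝ := fun i => if lam i = 0 then 0 else Real.sqrt (lam i) / lam i with hfdef
  set T : Matrix n n ℝ := V * diagonal f * Vᴴ with hTdef
  have hTH : Tᴴ = T := by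
    rw [hTdef]
    simp [Matrix.conjTranspose_mul, Matrix.diagonal_conjTranspose, mul_assoc]
  refine ⟨G * T, ?_, ?_⟩
  · have h1 : (G * T)ᴴ * G = T * H := by
      rw [conjTranspose_mul, hTH]; exact Matrix.mul_assoc T Gᴴ G
    rw [h1, hTdef, hspec, conj_mul, conj_trace]
    have hTr : traceNorm G = ∑ i, Real.sqrt (lam i) := by
      unfold traceNorm
      rw [show ((Matrix.posSemidef_conjTranspose_mul_self G).1.eigenvectorUnitary.1 *
          diagonal ((fun x : ℝ => (RCLike.ofReal x : ℝ)) ∘ Real.sqrt ∘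
            (Matrix.posSemidef_conjTranspose_mul_self G).1.eigenvalues) *
          (star (Matrix.posSemidef_conjTranspose_mul_self G).1.eigenvectorUnitary : Matrix n n ℝ))
          = V * diagonal (Real.sqrt ∘ lam) * Vᴴ by
        rfl]
      rw [conj_trace]
      rfl
    rw [hTr]
    congr 1
    ext i
    by_cases h : lam i = 0
    · simp [Pi.mul_apply, hfdef, h]
    · simp only [Pi.mul_apply, hfdef, if_neg h]
      field_simp
  · have h2 : (G * T)ᴴ * (G * T) = T * H * T := by
      rw [conjTranspose_mul, hTH, hHdef]; simp only [Matrix.mul_assoc]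
    rw [h2, hTdef, hspec, conj_mul, conj_mul]
    have hone : (1 : Matrix n n ℝ) = V * diagonal (fun _ => 1) * Vᴴ := by
      rw [diagonal_one, mul_one]; exact hVV'.symm
    rw [hone, ← sub_mul, ← mul_sub, diagonal_sub]
    apply Matrix.PosSemidef.mul_mul_conjTranspose_same
    refine posSemidef_diagonal_iff.mpr fun i => ?_
    by_cases h : lam i = 0
    · simp [hfdef, h]
    · have hpos : 0 < lam i := lt_of_le_of_ne (hlam i) (Ne.symm h)
      have hm : (f * lam * f) i = 1 := by
        simp only [Pi.mul_apply, hfdef, if_neg h]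
        have hs : Real.sqrt (lam i) * Real.sqrt (lam i) = lam i := Real.mul_self_sqrt (hlam i)
        field_simp
        exact Real.sq_sqrt (hlam i)
      simp [hm]


lemma traceNorm_sum_rankone_le {m n : Type*} [Fintype m] [Fintype n] [DecidableEq m]
    [DecidableEq n] {N : ℕ} (c : Fin N → ℝ) (x : Fin N → m → ℝ) (y : Fin N → n → ℝ)
    (hc : ∀ i, 0 ≤ c i) :
    traceNorm (∑ i, c i • vecMulVec (x i) (y i)) ≤
      ∑ i, c i * (Real.sqrt (∑ a, x i a ^ 2) * Real.sqrt (∑ b, y i b ^ 2)) := by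
  obtain ⟨W, hW1, hW2⟩ := exists_dual_witness (∑ i, c i • vecMulVec (x i) (y i))
  have hWt : Wᴴ = Wᵀ := by ext a b; simp [conjTranspose_apply]
  have hz : ∀ v : n → ℝ, ∑ a, (W *ᵥ v) a ^ 2 ≤ ∑ b, v b ^ 2 := by
    intro v
    have h := hW2.dotProduct_mulVec_nonneg v
    rw [show (star v) = v by simp, sub_mulVec, one_mulVec, dotProduct_sub, sub_nonneg] at h
    have h2 : v ⬝ᵥ (Wᴴ * W) *ᵥ v = ∑ a, (W *ᵥ v) a ^ 2 := by
      rw [← mulVec_mulVec, dotProduct_mulVec, hWt, vecMul_transpose]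
      simp [dotProduct, pow_two]
    have h3 : v ⬝ᵥ v = ∑ b, v b ^ 2 := by simp [dotProduct, pow_two]
    rw [h2, h3] at h; exact h
  have key : ∀ (u : m → ℝ) (v : n → ℝ),
      (Wᴴ * vecMulVec u v).trace ≤ Real.sqrt (∑ a, u a ^ 2) * Real.sqrt (∑ b, v b ^ 2) := by
    intro u v
    have htr : (Wᴴ * vecMulVec u v).trace = ∑ a, u a * (W *ᵥ v) a := by
      simp only [trace, diag_apply, mul_apply, conjTranspose_apply, vecMulVec_apply, mulVec,
        dotProduct, star_trivial]
      rw [Finset.sum_comm]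
      refine Finset.sum_congr rfl fun a _ => ?_
      rw [Finset.mul_sum]
      exact Finset.sum_congr rfl fun b _ => by ring
    rw [htr]
    calc ∑ a, u a * (W *ᵥ v) a
        ≤ Real.sqrt (∑ a, u a ^ 2) * Real.sqrt (∑ a, (W *ᵥ v) a ^ 2) :=
          Real.sum_mul_le_sqrt_mul_sqrt _ _ _
      _ ≤ Real.sqrt (∑ a, u a ^ 2) * Real.sqrt (∑ b, v b ^ 2) :=
          mul_le_mul_of_nonneg_left (Real.sqrt_le_sqrt (hz v)) (Real.sqrt_nonneg _)
  rw [hW1, Matrix.mul_sum, trace_sum]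
  refine Finset.sum_le_sum fun i _ => ?_
  rw [Matrix.mul_smul, trace_smul, smul_eq_mul]
  exact mul_le_mul_of_nonneg_left (key _ _) (hc i)


lemma gsic_prob_bound {d : ℕ} {a : ℝ} {Mk : Fin (d ^ 2) → Matrix (Fin d) (Fin d) ℂ}
    (hM : IsGSICPOVM d a Mk) {ρ : Matrix (Fin d) (Fin d) ℂ} (hρ : IsDensityMatrix ρ) :
    ∑ k, (((Mk k * ρ).trace).re) ^ 2 ≤ (a * (d : ℝ) ^ 2 + 1) / ((d : ℝ) * ((d : ℝ) + 1)) := by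
  obtain ⟨hpos, hsum1, htr1, htra, htrc, ha1, ha2⟩ := hM
  have hd2 : 2 ≤ d := by
    by_contra hlt
    push_neg at hlt
    interval_cases d
    · norm_num at ha1 ha2; linarith
    · norm_num at ha1 ha2; linarith
  have hdR : (2 : ℝ) ≤ (d : ℝ) := by exact_mod_cast hd2
  have hd0 : (0 : ℝ) < (d : ℝ) := by linarith
  have hd0' : ((d : ℝ)) ≠ 0 := ne_of_gt hd0
  have hdsq : (0 : ℝ) < (d : ℝ) ^ 2 - 1 := by nlinarith
  set p : Fin (d ^ 2) → ℝ := fun k => ((Mk k * ρ).trace).re with hpdef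
  have hherm : ∀ k, (Mk k).IsHermitian := fun k => (hpos k).1
  have hrh : ρ.IsHermitian := hρ.1.1
  have htrp : ∀ k, (Mk k * ρ).trace = ((p k : ℝ) : ℂ) := fun k =>
    trace_mul_isReal (hherm k) hrh
  have hps : ∑ k, p k = 1 := by
    have h1 : ∑ k, (Mk k * ρ).trace = 1 := by
      rw [← trace_sum, ← Finset.sum_mul, hsum1, one_mul, hρ.2]
    rw [Finset.sum_congr rfl (fun k _ => htrp k)] at h1
    exact_mod_cast h1
  set c : ℝ := (1 - d * a) / (d * ((d : ℝ) ^ 2 - 1)) with hcdef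
  set q : Fin (d ^ 2) → ℝ := fun k => p k - 1 / (d : ℝ) ^ 2 with hqdef
  have hqs : ∑ k, q k = 0 := by
    rw [hqdef, Finset.sum_sub_distrib, hps, Finset.sum_const, Finset.card_univ,
      Fintype.card_fin, nsmul_eq_mul]
    push_cast
    field_simp
    ring
  have hqsC : ∑ k, ((q k : ℝ) : ℂ) = 0 := by exact_mod_cast hqs
  set Δ : Matrix (Fin d) (Fin d) ℂ := ρ - ((1 / (d : ℝ) : ℝ) : ℂ) • 1 with hΔdef
  set T : Matrix (Fin d) (Fin d) ℂ := ∑ k, ((q k : ℝ) : ℂ) • Mk k with hTdef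
  have hΔh : Δ.IsHermitian := by
    apply hrh.sub
    show (((1 / (d : ℝ) : ℝ) : ℂ) • (1 : Matrix (Fin d) (Fin d) ℂ))ᴴ = _
    rw [conjTranspose_smul, conjTranspose_one, Complex.star_def, Complex.conj_ofReal]
  have hTh : T.IsHermitian := by
    show Tᴴ = T
    rw [hTdef, conjTranspose_sum]
    refine Finset.sum_congr rfl fun k _ => ?_
    rw [conjTranspose_smul, (hherm k).eq, Complex.star_def, Complex.conj_ofReal]
  -- traces
  have hdC : ((d : ℂ)) ≠ 0 := by
    exact_mod_cast Nat.cast_ne_zero.mpr (by omega)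
  have hΔΔ : ((Δ * Δ).trace).re = ((ρ * ρ).trace).re - 1 / (d : ℝ) := by
    have h1 : (Δ * Δ).trace = (ρ * ρ).trace - ((1 / (d : ℝ) : ℝ) : ℂ) := by
      rw [hΔdef]
      simp only [sub_mul, mul_sub, smul_mul_assoc, mul_smul_comm, one_mul, mul_one, smul_smul,
        trace_sub, trace_smul, trace_one, hρ.2, smul_eq_mul, Fintype.card_fin]
      push_cast
      field_simp
      ring
    rw [h1, Complex.sub_re, Complex.ofReal_re]
  have hTtr : T.trace = 0 := by
    rw [hTdef, trace_sum]
    simp only [trace_smul, htr1, smul_eq_mul]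
    rw [← Finset.sum_mul, hqsC, zero_mul]
  have hMM : ∀ k l, (Mk k * Mk l).trace = (if k = l then ((a : ℝ) : ℂ) else ((c : ℝ) : ℂ)) := by
    intro k l
    by_cases h : k = l
    · subst h; simp [htra k]
    · rw [if_neg h, htrc k l h, hcdef]
  have hTT : (T * T).trace = (((a - c) * ∑ k, (q k) ^ 2 : ℝ) : ℂ) := by
    rw [hTdef, Finset.sum_mul_sum]
    rw [trace_sum]
    have hinner : ∀ k, (∑ l, (((q k : ℝ) : ℂ) • Mk k * ((q l : ℝ) : ℂ) • Mk l)).trace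
        = ((q k : ℝ) : ℂ) * ((q k : ℝ) : ℂ) * (((a : ℝ) : ℂ) - ((c : ℝ) : ℂ)) := by
      intro k
      rw [trace_sum]
      have : ∀ l, (((q k : ℝ) : ℂ) • Mk k * ((q l : ℝ) : ℂ) • Mk l).trace
          = ((q k : ℝ) : ℂ) * ((q l : ℝ) : ℂ) * ((c : ℝ) : ℂ)
            + (if k = l then ((q k : ℝ) : ℂ) * ((q l : ℝ) : ℂ) * (((a : ℝ) : ℂ) - ((c : ℝ) : ℂ))
               else 0) := by
        intro l
        rw [smul_mul_assoc, mul_smul_comm, smul_smul, trace_smul, smul_eq_mul, hMM k l]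
        by_cases h : k = l
        · rw [if_pos h, if_pos h]; ring
        · rw [if_neg h, if_neg h]; ring
      rw [Finset.sum_congr rfl (fun l _ => this l), Finset.sum_add_distrib]
      rw [Finset.sum_ite_eq Finset.univ k
        (fun l => ((q k : ℝ) : ℂ) * ((q l : ℝ) : ℂ) * (((a : ℝ) : ℂ) - ((c : ℝ) : ℂ)))]
      have : ∑ l, ((q k : ℝ) : ℂ) * ((q l : ℝ) : ℂ) * ((c : ℝ) : ℂ) = 0 := by
        rw [← Finset.sum_mul, ← Finset.mul_sum, hqsC, mul_zero, zero_mul]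
      rw [this, zero_add, if_pos (Finset.mem_univ k)]
    rw [Finset.sum_congr rfl (fun k _ => hinner k)]
    push_cast
    rw [Finset.mul_sum]
    refine Finset.sum_congr rfl fun k _ => by ring
  have hΔT : ((Δ * T).trace).re = (∑ k, (p k) ^ 2) - 1 / (d : ℝ) ^ 2 := by
    have h1 : (Δ * T).trace = ((((∑ k, (p k) ^ 2) - 1 / (d : ℝ) ^ 2 : ℝ)) : ℂ) := by
      rw [hΔdef, sub_mul, trace_sub, smul_mul_assoc, one_mul, trace_smul, hTtr, smul_zero,
        sub_zero]
      rw [hTdef, Finset.mul_sum, trace_sum]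
      have : ∀ k, (ρ * (((q k : ℝ) : ℂ) • Mk k)).trace = ((q k * p k : ℝ) : ℂ) := by
        intro k
        rw [mul_smul_comm, trace_smul, trace_mul_comm, htrp k, smul_eq_mul]
        push_cast
        ring
      rw [Finset.sum_congr rfl (fun k _ => this k)]
      rw [← Complex.ofReal_sum]
      congr 1
      rw [hqdef]
      have : ∀ k, (p k - 1 / (d : ℝ) ^ 2) * p k = p k ^ 2 - (1 / (d : ℝ) ^ 2) * p k := by
        intro k; ring
      rw [Finset.sum_congr rfl (fun k _ => this k), Finset.sum_sub_distrib, ← Finset.mul_sum,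
        hps, mul_one]
    rw [h1, Complex.ofReal_re]
  -- Cauchy–Schwarz
  have hCS := herm_cauchy_schwarz hΔh hTh
  set S : ℝ := ∑ k, (p k) ^ 2 with hSdef
  have hqq : ∑ k, (q k) ^ 2 = S - 1 / (d : ℝ) ^ 2 := by
    rw [hqdef]
    have : ∀ k, (p k - 1 / (d : ℝ) ^ 2) ^ 2
        = p k ^ 2 - (2 / (d : ℝ) ^ 2) * p k + 1 / (d : ℝ) ^ 4 := by
      intro k; field_simp; ring
    rw [Finset.sum_congr rfl (fun k _ => this k), Finset.sum_add_distrib,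
      Finset.sum_sub_distrib, ← Finset.mul_sum, hps, mul_one, Finset.sum_const,
      Finset.card_univ, Fintype.card_fin, nsmul_eq_mul]
    push_cast
    field_simp
    ring
  have hx0 : 0 ≤ S - 1 / (d : ℝ) ^ 2 := by
    rw [← hqq]; exact Finset.sum_nonneg fun k _ => sq_nonneg _
  have hTTre : ((T * T).trace).re = (a - c) * (S - 1 / (d : ℝ) ^ 2) := by
    rw [hTT, Complex.ofReal_re, hqq]
  have hac : 0 ≤ a - c := by
    have had3 : 1 < a * (d : ℝ) ^ 3 := by
      rw [div_lt_iff₀ (by positivity)] at ha1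
      linarith
    rw [hcdef, sub_nonneg, div_le_iff₀ (by positivity)]
    nlinarith
  have hρ2 : ((ρ * ρ).trace).re ≤ 1 := trace_sq_le_one hρ
  -- combine
  have hcs2 : (S - 1 / (d : ℝ) ^ 2) ^ 2
      ≤ (1 - 1 / (d : ℝ)) * ((a - c) * (S - 1 / (d : ℝ) ^ 2)) := by
    calc (S - 1 / (d : ℝ) ^ 2) ^ 2 = (((Δ * T).trace).re) ^ 2 := by rw [hΔT]
      _ ≤ ((Δ * Δ).trace).re * ((T * T).trace).re := hCS
      _ ≤ (1 - 1 / (d : ℝ)) * ((a - c) * (S - 1 / (d : ℝ) ^ 2)) := by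
          rw [hΔΔ, hTTre]
          have hBnn : 0 ≤ (a - c) * (S - 1 / (d : ℝ) ^ 2) := mul_nonneg hac hx0
          apply mul_le_mul_of_nonneg_right _ hBnn
          linarith
  have hxK : S - 1 / (d : ℝ) ^ 2 ≤ (1 - 1 / (d : ℝ)) * (a - c) := by
    rcases eq_or_lt_of_le hx0 with h | h
    · rw [← h]
      have h1 : 0 ≤ 1 - 1 / (d : ℝ) := by
        rw [sub_nonneg]
        rw [div_le_one hd0]
        linarith
      exact mul_nonneg h1 hac
    · have := hcs2
      have h2 : (S - 1 / (d : ℝ) ^ 2) * (S - 1 / (d : ℝ) ^ 2)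
          ≤ ((1 - 1 / (d : ℝ)) * (a - c)) * (S - 1 / (d : ℝ) ^ 2) := by nlinarith
      exact le_of_mul_le_mul_right h2 h
  have hfinal : 1 / (d : ℝ) ^ 2 + (1 - 1 / (d : ℝ)) * (a - c)
      = (a * (d : ℝ) ^ 2 + 1) / ((d : ℝ) * ((d : ℝ) + 1)) := by
    rw [hcdef]
    have h1 : ((d : ℝ) + 1) ≠ 0 := by linarith
    have h2 : ((d : ℝ) ^ 2 - 1) ≠ 0 := ne_of_gt hdsq
    field_simp
    ring
  linarith



/-- Corollary 1: separability criterion based on GSICPOVMs. -/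
theorem traceNorm_MMatG_le_of_separable
    {dA dB : ℕ} {aA aB : ℝ}
    (MA : Fin (dA ^ 2) → Matrix (Fin dA) (Fin dA) ℂ)
    (MB : Fin (dB ^ 2) → Matrix (Fin dB) (Fin dB) ℂ)
    (hMA : IsGSICPOVM dA aA MA) (hMB : IsGSICPOVM dB aB MB)
    (ρ : Matrix (Fin dA × Fin dB) (Fin dA × Fin dB) ℂ)
    (hsep : Separable ρ)
    (μ ν : ℝ) (l : ℕ) (hl : 0 < l) :
    traceNorm (MMatG l MA MB μ ν ρ) ≤
      Real.sqrt
        (((l : ℝ) * μ ^ 2 + (aA * (dA : ℝ) ^ 2 + 1) / ((dA : ℝ) * ((dA : ℝ) + 1))) *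
         ((l : ℝ) * ν ^ 2 + (aB * (dB : ℝ) ^ 2 + 1) / ((dB : ℝ) * ((dB : ℝ) + 1)))) := by
  obtain ⟨n, pr, ρA, ρB, hp0, hp1, hDA, hDB, hρeq⟩ := hsep
  set X : Fin n → (Fin l ⊕ Fin (dA ^ 2)) → ℝ := fun i =>
    Sum.elim (fun _ => μ) (fun α => ((MA α * ρA i).trace).re) with hXdef
  set Y : Fin n → (Fin l ⊕ Fin (dB ^ 2)) → ℝ := fun i =>
    Sum.elim (fun _ => ν) (fun β => ((MB β * ρB i).trace).re) with hYdef
  -- partial traces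
  have hptA : ptraceA ρ = ∑ i, (pr i : ℂ) • ρB i := by
    ext x y
    simp only [ptraceA, Matrix.of_apply, hρeq, Matrix.sum_apply, Matrix.smul_apply,
      Matrix.kroneckerMap_apply, smul_eq_mul]
    rw [Finset.sum_comm]
    refine Finset.sum_congr rfl fun i _ => ?_
    have : ∑ k, (pr i : ℂ) * (ρA i k k * ρB i x y)
        = (pr i : ℂ) * ((∑ k, ρA i k k) * ρB i x y) := by
      rw [Finset.sum_mul, Finset.mul_sum]
    rw [this]
    have htr : ∑ k, ρA i k k = 1 := (hDA i).2
    rw [htr, one_mul]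
  have hptB : ptraceB ρ = ∑ i, (pr i : ℂ) • ρA i := by
    ext x y
    simp only [ptraceB, Matrix.of_apply, hρeq, Matrix.sum_apply, Matrix.smul_apply,
      Matrix.kroneckerMap_apply, smul_eq_mul]
    rw [Finset.sum_comm]
    refine Finset.sum_congr rfl fun i _ => ?_
    have : ∑ k, (pr i : ℂ) * (ρA i x y * ρB i k k)
        = (pr i : ℂ) * (ρA i x y * (∑ k, ρB i k k)) := by
      rw [Finset.mul_sum, Finset.mul_sum]
    rw [this]
    have htr : ∑ k, ρB i k k = 1 := (hDB i).2
    rw [htr, mul_one]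
  -- decomposition of the block matrix
  have hdecomp : MMatG l MA MB μ ν ρ = ∑ i, pr i • vecMulVec (X i) (Y i) := by
    ext ab cd
    have hsum : (∑ i, pr i • vecMulVec (X i) (Y i)) ab cd
        = ∑ i, pr i * (X i ab * Y i cd) := by
      simp [Matrix.sum_apply, vecMulVec_apply]
    rw [hsum]
    cases ab with
    | inl s =>
      cases cd with
      | inl t =>
        simp only [MMatG, fromBlocks_apply₁₁, Matrix.of_apply, hXdef, hYdef, Sum.elim_inl]
        rw [show ∑ i, pr i * (μ * ν) = (∑ i, pr i) * (μ * ν) by rw [Finset.sum_mul], hp1,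
          one_mul]
      | inr β =>
        simp only [MMatG, fromBlocks_apply₁₂, Matrix.of_apply, hXdef, hYdef, Sum.elim_inl,
          Sum.elim_inr]
        rw [hptA, Finset.mul_sum, trace_sum]
        rw [Complex.re_sum, Finset.mul_sum]
        refine Finset.sum_congr rfl fun i _ => ?_
        rw [mul_smul_comm, trace_smul]
        rw [show ((pr i : ℂ) • (MB β * ρB i).trace).re = pr i * ((MB β * ρB i).trace).re by
          simp [smul_eq_mul, Complex.re_ofReal_mul]]
        ring
    | inr α =>
      cases cd with
      | inl t =>
        simp only [MMatG, fromBlocks_apply₂₁, Matrix.of_apply, hXdef, hYdef, Sum.elim_inl,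
          Sum.elim_inr]
        rw [hptB, Finset.mul_sum, trace_sum]
        rw [Complex.re_sum, Finset.mul_sum]
        refine Finset.sum_congr rfl fun i _ => ?_
        rw [mul_smul_comm, trace_smul]
        rw [show ((pr i : ℂ) • (MA α * ρA i).trace).re = pr i * ((MA α * ρA i).trace).re by
          simp [smul_eq_mul, Complex.re_ofReal_mul]]
        ring
      | inr β =>
        simp only [MMatG, fromBlocks_apply₂₂, Matrix.of_apply, hXdef, hYdef, Sum.elim_inr]
        rw [hρeq, Finset.mul_sum, trace_sum, Complex.re_sum]
        refine Finset.sum_congr rfl fun i _ => ?_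
        rw [mul_smul_comm, trace_smul]
        rw [← Matrix.mul_kronecker_mul, Matrix.trace_kronecker]
        have hA := trace_mul_isReal ((hMA.1 α)).1 (hDA i).1.1
        have hB := trace_mul_isReal ((hMB.1 β)).1 (hDB i).1.1
        rw [hA, hB, smul_eq_mul]
        push_cast
        simp only [← Complex.ofReal_mul, Complex.ofReal_re]
  rw [hdecomp]
  set CA : ℝ := (l : ℝ) * μ ^ 2 + (aA * (dA : ℝ) ^ 2 + 1) / ((dA : ℝ) * ((dA : ℝ) + 1))
    with hCAdef
  set CB : ℝ := (l : ℝ) * ν ^ 2 + (aB * (dB : ℝ) ^ 2 + 1) / ((dB : ℝ) * ((dB : ℝ) + 1))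
    with hCBdef
  have hXb : ∀ i, ∑ ab, (X i ab) ^ 2 ≤ CA := by
    intro i
    rw [Fintype.sum_sum_type]
    simp only [hXdef, Sum.elim_inl, Sum.elim_inr, Finset.sum_const, Finset.card_univ,
      Fintype.card_fin, nsmul_eq_mul]
    rw [hCAdef]
    have := gsic_prob_bound hMA (hDA i)
    linarith
  have hYb : ∀ i, ∑ cd, (Y i cd) ^ 2 ≤ CB := by
    intro i
    rw [Fintype.sum_sum_type]
    simp only [hYdef, Sum.elim_inl, Sum.elim_inr, Finset.sum_const, Finset.card_univ,
      Fintype.card_fin, nsmul_eq_mul]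
    rw [hCBdef]
    have := gsic_prob_bound hMB (hDB i)
    linarith
  have hn : n ≠ 0 := by
    rintro rfl
    simp at hp1
  have hCA0 : 0 ≤ CA := le_trans (Finset.sum_nonneg fun ab _ => sq_nonneg _)
    (hXb ⟨0, Nat.pos_of_ne_zero hn⟩)
  calc traceNorm (∑ i, pr i • vecMulVec (X i) (Y i))
      ≤ ∑ i, pr i * (Real.sqrt (∑ ab, (X i ab) ^ 2) * Real.sqrt (∑ cd, (Y i cd) ^ 2)) :=
        traceNorm_sum_rankone_le pr X Y hp0
    _ ≤ ∑ i, pr i * (Real.sqrt CA * Real.sqrt CB) := by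
        refine Finset.sum_le_sum fun i _ => ?_
        refine mul_le_mul_of_nonneg_left ?_ (hp0 i)
        exact mul_le_mul (Real.sqrt_le_sqrt (hXb i)) (Real.sqrt_le_sqrt (hYb i))
          (Real.sqrt_nonneg _) (Real.sqrt_nonneg _)
    _ = Real.sqrt CA * Real.sqrt CB := by rw [← Finset.sum_mul, hp1, one_mul]
    _ = Real.sqrt (CA * CB) := (Real.sqrt_mul hCA0 _).symm
end
end

section
/- Let {E^A_{α,k}} be an (N_A,M_A) POVM on C^{d_A} with parameter x_A and {E^B_{β,j}} an (N_B,M_B) POVM on C^{d_B} with parameter x_B. If a bipartite density matrix ρ on C^{d_A}⊗C^{d_B} is separable, then Σ_{α=1}^{N_A} Σ_{k=1}^{M_A} Σ_{β=1}^{N_B} Σ_{j=1}^{M_B} ( tr((E^A_{α,k} ⊗ E^B_{β,j}) ρ) )² ≤ ( (d_A−1)(d_A² + M_A² x_A)/(d_A M_A (M_A−1)) ) · ( (d_B−1)(d_B² + M_B² x_B)/(d_B M_B (M_B−1)) ). -/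
open Matrix
open scoped BigOperators ComplexOrder Kronecker

noncomputable section

namespace POVMAux

/-- trace of a product of two Hermitian matrices is real. -/
lemma trace_mul_real {d : ℕ} {A B : Matrix (Fin d) (Fin d) ℂ}
    (hA : A.IsHermitian) (hB : B.IsHermitian) :
    (A * B).trace = (((A * B).trace.re : ℝ) : ℂ) := by
  have h : (starRingEnd ℂ) ((A * B).trace) = (A * B).trace := by
    have h1 : ((A * B)ᴴ).trace = (B * A).trace := by
      rw [Matrix.conjTranspose_mul, hA.eq, hB.eq]
    have h2 : ((A * B)ᴴ).trace = star ((A * B).trace) := Matrix.trace_conjTranspose _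
    rw [show (starRingEnd ℂ) ((A * B).trace) = star ((A * B).trace) from rfl, ← h2, h1,
      Matrix.trace_mul_comm]
  have him : (A * B).trace.im = 0 := by
    have := congrArg Complex.im h
    simp [Complex.conj_im] at this
    linarith
  exact (Complex.ext (by simp) (by simp [him])).symm

lemma trace_conjTranspose_mul_self_re_nonneg {n : Type*} [Fintype n]
    (A : Matrix n n ℂ) : 0 ≤ (Aᴴ * A).trace.re := by
  rw [Matrix.trace, Complex.re_sum]
  apply Finset.sum_nonneg
  intro i _
  rw [Matrix.diag_apply, Matrix.mul_apply, Complex.re_sum]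
  apply Finset.sum_nonneg
  intro j _
  simp only [Matrix.conjTranspose_apply]
  rw [show star (A j i) * A j i = ((Complex.normSq (A j i) : ℝ) : ℂ) by
    rw [Complex.normSq_eq_conj_mul_self]; rfl]
  rw [Complex.ofReal_re]; exact Complex.normSq_nonneg _


lemma frame_bound {d N M : ℕ} {a : ℝ} (ha : 0 < a) (hM : (2:ℝ) ≤ (M:ℝ))
    (F : Fin N → Fin M → Matrix (Fin d) (Fin d) ℂ)
    (hFh : ∀ α k, (F α k).IsHermitian)
    (hsum : ∀ α, ∑ k, F α k = 0)
    (hFF : ∀ α k l, (F α k * F α l).trace =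
        (if k = l then ((a : ℝ) : ℂ) else ((-a/((M:ℝ)-1) : ℝ) : ℂ)))
    (hFG : ∀ α β k l, α ≠ β → (F α k * F β l).trace = 0)
    (T : Matrix (Fin d) (Fin d) ℂ) (hT : T.IsHermitian) :
    ∑ α, ∑ k, ((F α k * T).trace.re)^2 ≤ (a * M / ((M:ℝ)-1)) * (T * T).trace.re := by
  have hM1 : (0:ℝ) < (M:ℝ) - 1 := by linarith
  have hM0 : (0:ℝ) < (M:ℝ) := by linarith
  set c : ℝ := a * M / ((M:ℝ)-1) with hc
  have hcpos : 0 < c := div_pos (mul_pos ha hM0) hM1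
  set q : Fin N → Fin M → ℝ := fun α k => ((F α k * T).trace.re) with hqdef
  have hq : ∀ α k, (F α k * T).trace = ((q α k : ℝ) : ℂ) := fun α k =>
    trace_mul_real (hFh α k) hT
  have hqsum : ∀ α, ∑ k, q α k = 0 := by
    intro α
    have h1 : ∑ k, (F α k * T).trace = 0 := by
      rw [← Matrix.trace_sum, ← Finset.sum_mul, hsum α, Matrix.zero_mul, Matrix.trace_zero]
    simp only [hq] at h1
    exact_mod_cast h1
  set S : Matrix (Fin d) (Fin d) ℂ := ∑ α, ∑ k, (((q α k / c : ℝ)) : ℂ) • F α k with hS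
  have hTS : (T * S).trace = ((∑ α, ∑ k, q α k ^ 2 / c : ℝ) : ℂ) := by
    calc (T * S).trace = ∑ α, ∑ k, ((q α k / c : ℝ) : ℂ) * (F α k * T).trace := by
          simp only [hS, Finset.mul_sum, Matrix.trace_sum, mul_smul_comm, Matrix.trace_smul,
            smul_eq_mul, Matrix.trace_mul_comm T]
      _ = ((∑ α, ∑ k, q α k ^ 2 / c : ℝ) : ℂ) := by
          push_cast
          refine Finset.sum_congr rfl fun α _ => Finset.sum_congr rfl fun k _ => ?_
          rw [hq]; push_cast; ring
  have hST : (S * T).trace = ((∑ α, ∑ k, q α k ^ 2 / c : ℝ) : ℂ) := by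
    rw [Matrix.trace_mul_comm, hTS]
  have hSS : (S * S).trace = ((∑ α, ∑ k, q α k ^ 2 / c : ℝ) : ℂ) := by
    have expand : (S * S).trace = ∑ α, ∑ k, ∑ β, ∑ l,
        (((q α k / c : ℝ):ℂ) * ((q β l / c : ℝ):ℂ)) * (F α k * F β l).trace := by
      simp only [hS, Finset.sum_mul, Finset.mul_sum, Matrix.trace_sum, smul_mul_assoc,
        mul_smul_comm, Matrix.trace_smul, smul_eq_mul]
      refine Finset.sum_congr rfl fun α _ => Finset.sum_congr rfl fun k _ => ?_
      refine Finset.sum_congr rfl fun β _ => Finset.sum_congr rfl fun l _ => ?_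
      rw [Matrix.trace_mul_comm]
      ring
    rw [expand]
    have step1 : ∀ α (k : Fin M), (∑ β, ∑ l,
        (((q α k / c : ℝ):ℂ) * ((q β l / c : ℝ):ℂ)) * (F α k * F β l).trace)
        = ((q α k ^ 2 / c : ℝ):ℂ) := by
      intro α k
      rw [Finset.sum_eq_single α]
      · -- the β = α block
        have hreal : ∀ l, (((q α k / c : ℝ):ℂ) * ((q α l / c : ℝ):ℂ)) * (F α k * F α l).trace
            = (((q α k / c) * (q α l / c) * (if k = l then a else -a/((M:ℝ)-1)) : ℝ) : ℂ) := by
          intro l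
          rw [hFF α k l]
          split <;> push_cast <;> ring
        simp only [hreal]
        rw [← Complex.ofReal_sum]
        refine Complex.ofReal_inj.mpr ?_
        have hterm : ∀ l, (q α k / c) * (q α l / c) * (if k = l then a else -a/((M:ℝ)-1))
            = ((q α k / c) * (-a/((M:ℝ)-1)) / c) * q α l
              + (if l = k then (q α k / c)^2 * (a + a/((M:ℝ)-1)) else 0) := by
          intro l
          rcases eq_or_ne k l with h | h
          · subst h; simp; ring
          · simp [h, Ne.symm h]; ring
        rw [Finset.sum_congr rfl fun l _ => hterm l, Finset.sum_add_distrib,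
          ← Finset.mul_sum, hqsum α, mul_zero, zero_add, Finset.sum_ite_eq' Finset.univ k,
          if_pos (Finset.mem_univ k)]
        rw [hc]
        field_simp
        ring
      · intro β _ hβ
        rw [Finset.sum_eq_zero]
        intro l _
        rw [hFG α β k l (Ne.symm hβ), mul_zero]
      · intro h; exact absurd (Finset.mem_univ α) h
    rw [Finset.sum_congr rfl fun α _ => Finset.sum_congr rfl fun k _ => step1 α k]
    push_cast
    ring
  -- the residual
  set R : Matrix (Fin d) (Fin d) ℂ := T - S with hR
  have hSh : Sᴴ = S := by
    simp only [hS, Matrix.conjTranspose_sum, Matrix.conjTranspose_smul]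
    refine Finset.sum_congr rfl fun α _ => Finset.sum_congr rfl fun k _ => ?_
    rw [(hFh α k).eq]
    congr 1
    simp [RCLike.star_def]
  have hRh : Rᴴ = R := by rw [hR, Matrix.conjTranspose_sub, hSh, hT.eq]
  have hnn : 0 ≤ (Rᴴ * R).trace.re := trace_conjTranspose_mul_self_re_nonneg R
  rw [hRh] at hnn
  have hexp : (R * R).trace = (T * T).trace - ((∑ α, ∑ k, q α k ^ 2 / c : ℝ) : ℂ) := by
    rw [hR, Matrix.sub_mul, Matrix.mul_sub, Matrix.mul_sub, Matrix.trace_sub, Matrix.trace_sub,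
      Matrix.trace_sub, hTS, hST, hSS]
    ring
  rw [hexp] at hnn
  have hre : ((T * T).trace - ((∑ α, ∑ k, q α k ^ 2 / c : ℝ) : ℂ)).re
      = (T * T).trace.re - (∑ α, ∑ k, q α k ^ 2 / c) := by
    rw [Complex.sub_re, Complex.ofReal_re]
  rw [hre] at hnn
  have hdiv : (∑ α, ∑ k, q α k ^ 2 / c) = (∑ α, ∑ k, q α k ^ 2) / c := by
    simp [Finset.sum_div]
  rw [hdiv] at hnn
  have := (div_le_iff₀ hcpos).mp (by linarith : (∑ α, ∑ k, q α k ^ 2) / c ≤ (T*T).trace.re)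
  calc ∑ α, ∑ k, ((F α k * T).trace.re)^2 = ∑ α, ∑ k, q α k ^ 2 := rfl
    _ ≤ (T*T).trace.re * c := this
    _ = c * (T*T).trace.re := by ring

/-- rank-one operator `|A⟩⟨B|` on matrix space, as a big matrix. -/
def M2 {d : ℕ} (A B : Matrix (Fin d) (Fin d) ℂ) :
    Matrix (Fin d × Fin d) (Fin d × Fin d) ℂ :=
  Matrix.of fun p q => A p.1 p.2 * star (B q.1 q.2)

lemma M2_apply {d : ℕ} (A B : Matrix (Fin d) (Fin d) ℂ) (p q) :
    M2 A B p q = A p.1 p.2 * star (B q.1 q.2) := rfl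

lemma sum_star_mul_eq_trace {d : ℕ} (A B : Matrix (Fin d) (Fin d) ℂ) :
    (∑ p : Fin d × Fin d, star (A p.1 p.2) * B p.1 p.2) = (Aᴴ * B).trace := by
  rw [Fintype.sum_prod_type]
  simp only [Matrix.trace, Matrix.diag_apply, Matrix.mul_apply, Matrix.conjTranspose_apply]
  rw [Finset.sum_comm]

lemma M2_mul_M2 {d : ℕ} (A B C D : Matrix (Fin d) (Fin d) ℂ) (hB : Bᴴ = B) :
    M2 A B * M2 C D = (B * C).trace • M2 A D := by
  ext p q
  simp only [Matrix.mul_apply, M2_apply, Matrix.smul_apply, smul_eq_mul]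
  have h : ∀ r : Fin d × Fin d,
      A p.1 p.2 * star (B r.1 r.2) * (C r.1 r.2 * star (D q.1 q.2))
      = star (B r.1 r.2) * C r.1 r.2 * (A p.1 p.2 * star (D q.1 q.2)) := fun r => by ring
  rw [Finset.sum_congr rfl fun r _ => h r, ← Finset.sum_mul, sum_star_mul_eq_trace, hB]

lemma trace_M2 {d : ℕ} (A : Matrix (Fin d) (Fin d) ℂ) :
    (M2 A A).trace = (Aᴴ * A).trace := by
  rw [← sum_star_mul_eq_trace]
  simp only [Matrix.trace, Matrix.diag_apply, M2_apply]
  exact Finset.sum_congr rfl fun p _ => mul_comm _ _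

lemma M2_conjTranspose {d : ℕ} (A : Matrix (Fin d) (Fin d) ℂ) :
    (M2 A A)ᴴ = M2 A A := by
  ext p q
  simp only [Matrix.conjTranspose_apply, M2_apply, star_mul', star_star]
  exact mul_comm _ _

lemma M2_sum_right {d n : ℕ} (A : Matrix (Fin d) (Fin d) ℂ)
    (f : Fin n → Matrix (Fin d) (Fin d) ℂ) :
    ∑ l, M2 A (f l) = M2 A (∑ l, f l) := by
  ext p q
  simp only [Finset.sum_apply, Matrix.sum_apply, M2_apply, star_sum, Finset.mul_sum]

lemma M2_zero_right {d : ℕ} (A : Matrix (Fin d) (Fin d) ℂ) :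
    M2 A (0 : Matrix (Fin d) (Fin d) ℂ) = 0 := by
  ext p q
  simp [M2_apply]

lemma dim_bound {d N M : ℕ} {a c : ℝ} (ha : 0 < a) (hM : (2:ℝ) ≤ (M:ℝ)) (hd : (2:ℝ) ≤ (d:ℝ))
    (hc : c = a * M / ((M:ℝ) - 1))
    (F : Fin N → Fin M → Matrix (Fin d) (Fin d) ℂ)
    (hFh : ∀ α k, (F α k).IsHermitian)
    (hsum : ∀ α, ∑ k, F α k = 0)
    (hFF : ∀ α k l, (F α k * F α l).trace =
        (if k = l then ((a : ℝ) : ℂ) else ((-a/((M:ℝ)-1) : ℝ) : ℂ)))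
    (hFG : ∀ α β k l, α ≠ β → (F α k * F β l).trace = 0)
    (htr : ∀ α k, (F α k).trace = 0) :
    (N:ℝ) * ((M:ℝ) - 1) ≤ (d:ℝ)^2 - 1 := by
  have hM1 : (0:ℝ) < (M:ℝ) - 1 := by linarith
  have hM0 : (0:ℝ) < (M:ℝ) := by linarith
  have hd0 : (0:ℝ) < (d:ℝ) := by linarith
  have hcpos : 0 < c := hc ▸ div_pos (mul_pos ha hM0) hM1
  set X : Matrix (Fin d × Fin d) (Fin d × Fin d) ℂ := ∑ α, ∑ k, M2 (F α k) (F α k) with hX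
  set Y : Matrix (Fin d × Fin d) (Fin d × Fin d) ℂ :=
    M2 (1 : Matrix (Fin d) (Fin d) ℂ) 1 with hY
  set r : ℂ := ((c⁻¹ : ℝ) : ℂ) with hr
  set s : ℂ := (((d:ℝ)⁻¹ : ℝ) : ℂ) with hs
  set G : Matrix (Fin d × Fin d) (Fin d × Fin d) ℂ := r • X + s • Y with hG
  have hFmul : ∀ α β k l, M2 (F α k) (F α k) * M2 (F β l) (F β l)
      = (F α k * F β l).trace • M2 (F α k) (F β l) := fun α β k l =>
    M2_mul_M2 _ _ _ _ (hFh α k).eq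
  have hXX : X * X = ((c : ℝ) : ℂ) • X := by
    rw [hX, Finset.sum_mul]
    rw [Finset.sum_congr rfl fun α _ => Finset.sum_mul .. ]
    have hinner : ∀ (α : Fin N) (k : Fin M),
        (M2 (F α k) (F α k)) * (∑ β, ∑ l, M2 (F β l) (F β l))
        = ((c : ℝ) : ℂ) • M2 (F α k) (F α k) := by
      intro α k
      rw [Finset.mul_sum]
      rw [Finset.sum_eq_single α]
      · rw [Finset.mul_sum]
        have hterm : ∀ l, M2 (F α k) (F α k) * M2 (F α l) (F α l)
            = ((-a/((M:ℝ)-1) : ℝ) : ℂ) • M2 (F α k) (F α l)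
              + (if l = k then (((a + a/((M:ℝ)-1)) : ℝ) : ℂ) • M2 (F α k) (F α k) else 0) := by
          intro l
          rw [hFmul α α k l, hFF α k l]
          rcases eq_or_ne k l with h | h
          · subst h
            rw [if_pos rfl, if_pos rfl, ← add_smul]
            congr 1
            push_cast; ring
          · rw [if_neg h, if_neg (Ne.symm h), add_zero]
        rw [Finset.sum_congr rfl fun l _ => hterm l, Finset.sum_add_distrib]
        rw [← Finset.smul_sum, M2_sum_right, hsum α, M2_zero_right, smul_zero, zero_add]
        rw [Finset.sum_ite_eq' Finset.univ k, if_pos (Finset.mem_univ k)]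
        congr 1
        rw [hc]
        refine Complex.ofReal_inj.mpr ?_
        have hM1ne : ((M:ℝ)-1) ≠ 0 := ne_of_gt hM1
        field_simp
        ring
      · intro β _ hβ
        rw [Finset.mul_sum, Finset.sum_eq_zero]
        intro l _
        rw [hFmul α β k l, hFG α β k l (Ne.symm hβ), zero_smul]
      · intro h; exact absurd (Finset.mem_univ α) h
    rw [Finset.sum_congr rfl fun α _ => Finset.sum_congr rfl fun k _ => hinner α k]
    simp only [← Finset.smul_sum]
  have hXY : X * Y = 0 := by
    rw [hX, Finset.sum_mul]
    apply Finset.sum_eq_zero; intro α _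
    rw [Finset.sum_mul]
    apply Finset.sum_eq_zero; intro k _
    rw [hY, M2_mul_M2 _ _ _ _ (hFh α k).eq, Matrix.mul_one, htr α k, zero_smul]
  have hYX : Y * X = 0 := by
    rw [hX, Finset.mul_sum]
    apply Finset.sum_eq_zero; intro α _
    rw [Finset.mul_sum]
    apply Finset.sum_eq_zero; intro k _
    rw [hY, M2_mul_M2 _ _ _ _ Matrix.conjTranspose_one, Matrix.one_mul, htr α k, zero_smul]
  have hYY : Y * Y = ((d:ℝ) : ℂ) • Y := by
    rw [hY, M2_mul_M2 _ _ _ _ Matrix.conjTranspose_one, Matrix.mul_one, Matrix.trace_one]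
    norm_num
  have hG2 : G * G = G := by
    rw [hG, add_mul, mul_add, mul_add, smul_mul_assoc, smul_mul_assoc, smul_mul_assoc,
      smul_mul_assoc, mul_smul_comm, mul_smul_comm, mul_smul_comm, mul_smul_comm,
      hXX, hXY, hYX, hYY, smul_zero, smul_zero, smul_zero, add_zero, zero_add,
      smul_smul, smul_smul, smul_smul, smul_smul]
    congr 1
    · congr 1
      rw [hr]
      have : c ≠ 0 := ne_of_gt hcpos
      push_cast
      field_simp
    · congr 1
      rw [hs]
      have : (d:ℝ) ≠ 0 := ne_of_gt hd0
      push_cast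
      field_simp
  have hGH : Gᴴ = G := by
    rw [hG, Matrix.conjTranspose_add, Matrix.conjTranspose_smul, Matrix.conjTranspose_smul,
      hX, Matrix.conjTranspose_sum]
    simp only [Matrix.conjTranspose_sum, M2_conjTranspose]
    rw [hY, M2_conjTranspose, hr, hs]
    simp [Complex.star_def, Complex.conj_ofReal]
  have hproj : ((1 - G)ᴴ * (1 - G)) = 1 - G := by
    rw [Matrix.conjTranspose_sub, Matrix.conjTranspose_one, hGH, Matrix.sub_mul,
      Matrix.one_mul, Matrix.mul_sub, Matrix.mul_one, hG2]
    abel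
  have h0 : 0 ≤ (1 - G).trace.re := by
    rw [← hproj]; exact trace_conjTranspose_mul_self_re_nonneg _
  have htrX : X.trace = ((↑N * ↑M * a : ℝ) : ℂ) := by
    rw [hX, Matrix.trace_sum]
    have : ∀ α : Fin N, (∑ k, M2 (F α k) (F α k)).trace = ((↑M * a : ℝ) : ℂ) := by
      intro α
      rw [Matrix.trace_sum]
      have : ∀ k : Fin M, (M2 (F α k) (F α k)).trace = ((a : ℝ) : ℂ) := by
        intro k
        rw [trace_M2, (hFh α k).eq]
        have := hFF α k k
        rw [if_pos rfl] at this
        exact this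
      rw [Finset.sum_congr rfl fun k _ => this k, Finset.sum_const, Finset.card_univ,
        Fintype.card_fin, nsmul_eq_mul]
      push_cast; ring
    rw [Finset.sum_congr rfl fun α _ => this α, Finset.sum_const, Finset.card_univ,
      Fintype.card_fin, nsmul_eq_mul]
    push_cast; ring
  have htrY : Y.trace = ((d : ℝ) : ℂ) := by
    rw [hY, trace_M2, Matrix.conjTranspose_one, Matrix.one_mul, Matrix.trace_one]
    norm_num
  have htrG : G.trace.re = ↑N * (↑M - 1) + 1 := by
    rw [hG, Matrix.trace_add, Matrix.trace_smul, Matrix.trace_smul, htrX, htrY, hr, hs]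
    have h1 : (((c⁻¹ : ℝ) : ℂ) • ((↑N * ↑M * a : ℝ) : ℂ)) = ((c⁻¹ * (↑N * ↑M * a) : ℝ) : ℂ) := by
      rw [smul_eq_mul]; push_cast; ring
    have h2 : ((((d:ℝ)⁻¹ : ℝ) : ℂ) • ((d : ℝ) : ℂ)) = (((d:ℝ)⁻¹ * (d:ℝ) : ℝ) : ℂ) := by
      rw [smul_eq_mul]; push_cast; ring
    rw [h1, h2, ← Complex.ofReal_add, Complex.ofReal_re]
    rw [hc]
    have hane : a ≠ 0 := ne_of_gt ha
    have hMne : (M:ℝ) ≠ 0 := ne_of_gt hM0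
    have hM1ne : (M:ℝ) - 1 ≠ 0 := ne_of_gt hM1
    have hdne : (d:ℝ) ≠ 0 := ne_of_gt hd0
    field_simp
  have htr1 : (1 : Matrix (Fin d × Fin d) (Fin d × Fin d) ℂ).trace.re = (d:ℝ)^2 := by
    rw [Matrix.trace_one]
    simp [Fintype.card_prod, Fintype.card_fin]
    push_cast; ring
  rw [Matrix.trace_sub, Complex.sub_re, htr1, htrG] at h0
  linarith

lemma purity_le_one {d : ℕ} {σ : Matrix (Fin d) (Fin d) ℂ}
    (h : σ.PosSemidef) (h1 : σ.trace = 1) : ((σ * σ).trace).re ≤ 1 := by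
  have hH : σ.IsHermitian := h.1
  set U : Matrix (Fin d) (Fin d) ℂ := (hH.eigenvectorUnitary : Matrix (Fin d) (Fin d) ℂ)
    with hU
  have hUU : star U * U = 1 :=
    (Matrix.mem_unitaryGroup_iff').mp (hH.eigenvectorUnitary).2
  set D : Matrix (Fin d) (Fin d) ℂ :=
    Matrix.diagonal (RCLike.ofReal ∘ hH.eigenvalues) with hD
  have hspec : σ = U * D * star U := hH.spectral_theorem
  have htr : σ.trace = D.trace := by
    rw [hspec, Matrix.trace_mul_comm, ← Matrix.mul_assoc, hUU, Matrix.one_mul]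
  have htr2 : (σ * σ).trace = (D * D).trace := by
    rw [hspec]
    have : U * D * star U * (U * D * star U) = U * (D * D) * star U := by
      simp only [Matrix.mul_assoc]
      rw [← Matrix.mul_assoc (star U) U, hUU, Matrix.one_mul]
    rw [this, Matrix.trace_mul_comm, ← Matrix.mul_assoc, hUU, Matrix.one_mul]
  have hDtr : D.trace = ((∑ i, hH.eigenvalues i : ℝ) : ℂ) := by
    rw [hD, Matrix.trace_diagonal]
    push_cast
    rfl
  have hDtr2 : (D * D).trace = ((∑ i, (hH.eigenvalues i)^2 : ℝ) : ℂ) := by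
    rw [hD, Matrix.diagonal_mul_diagonal, Matrix.trace_diagonal]
    push_cast
    refine Finset.sum_congr rfl fun i _ => ?_
    simp [Function.comp, sq]
  have hsum1 : ∑ i, hH.eigenvalues i = 1 := by
    have := h1
    rw [htr, hDtr] at this
    exact_mod_cast this
  have hnonneg : ∀ i ∈ Finset.univ, 0 ≤ hH.eigenvalues i := fun i _ => h.eigenvalues_nonneg i
  have key : ∑ i, (hH.eigenvalues i)^2 ≤ (∑ i, hH.eigenvalues i)^2 :=
    Finset.sum_sq_le_sq_sum_of_nonneg hnonneg
  rw [htr2, hDtr2, Complex.ofReal_re]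
  rw [hsum1] at key
  linarith [key]

lemma povm_dims {d M : ℕ} {x : ℝ}
    (hlt : (d:ℝ)/(M:ℝ)^2 < x) (hle : x ≤ min ((d:ℝ)^2/(M:ℝ)^2) ((d:ℝ)/(M:ℝ))) :
    (2:ℝ) ≤ (M:ℝ) ∧ (2:ℝ) ≤ (d:ℝ) := by
  have hle1 : x ≤ (d:ℝ)^2/(M:ℝ)^2 := le_trans hle (min_le_left _ _)
  have hle2 : x ≤ (d:ℝ)/(M:ℝ) := le_trans hle (min_le_right _ _)
  clear hle
  have hM : 2 ≤ M := by
    by_contra h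
    push_neg at h
    interval_cases M
    · norm_num at hlt hle2
      linarith
    · norm_num at hlt hle2
      linarith
  have hd : 2 ≤ d := by
    by_contra h
    push_neg at h
    interval_cases d
    · norm_num at hlt hle2
      linarith
    · norm_num at hlt hle1
      linarith
  constructor
  · exact_mod_cast hM
  · exact_mod_cast hd

lemma single_party {d N M : ℕ} {x : ℝ}
    (E : Fin N → Fin M → Matrix (Fin d) (Fin d) ℂ) (hE : IsNMPOVM d N M x E)
    (σ : Matrix (Fin d) (Fin d) ℂ) (hσ : IsDensityMatrix σ) :
    ∑ α, ∑ k, ((E α k * σ).trace.re)^2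
      ≤ ((d:ℝ)-1) * ((d:ℝ)^2 + (M:ℝ)^2*x) / ((d:ℝ)*(M:ℝ)*((M:ℝ)-1)) := by
  obtain ⟨hpos, hsum1, htrE, hx2, hoff, hdiff, hlt, hle⟩ := hE
  obtain ⟨hM2, hd2⟩ := povm_dims hlt hle
  have hM0 : (0:ℝ) < M := by linarith
  have hM1 : (0:ℝ) < (M:ℝ)-1 := by linarith
  have hd0 : (0:ℝ) < d := by linarith
  have hMne : (M:ℝ) ≠ 0 := ne_of_gt hM0
  have hM1ne : (M:ℝ) - 1 ≠ 0 := ne_of_gt hM1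
  have hdne : (d:ℝ) ≠ 0 := ne_of_gt hd0
  have hMCne : (M:ℂ) ≠ 0 := by exact_mod_cast (show ((M:ℝ):ℂ) ≠ 0 by exact_mod_cast hMne)
  have hdCne : (d:ℂ) ≠ 0 := by exact_mod_cast (show ((d:ℝ):ℂ) ≠ 0 by exact_mod_cast hdne)
  set a : ℝ := x - (d:ℝ)/(M:ℝ)^2 with ha_def
  have ha : 0 < a := by rw [ha_def]; linarith
  set c : ℝ := a * M / ((M:ℝ)-1) with hc_def
  set F : Fin N → Fin M → Matrix (Fin d) (Fin d) ℂ :=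
    fun α k => E α k - (((M:ℝ)⁻¹ : ℝ) : ℂ) • 1 with hFdef
  have hFh : ∀ α k, (F α k).IsHermitian := by
    intro α k
    show (F α k)ᴴ = F α k
    rw [hFdef]
    simp only [Matrix.conjTranspose_sub, Matrix.conjTranspose_smul, Matrix.conjTranspose_one,
      (hpos α k).1.eq, Complex.star_def, Complex.conj_ofReal]
  have hsumF : ∀ α, ∑ k, F α k = 0 := by
    intro α
    rw [hFdef]
    rw [Finset.sum_sub_distrib, hsum1 α, Finset.sum_const, Finset.card_univ, Fintype.card_fin]
    rw [← Nat.cast_smul_eq_nsmul ℂ, smul_smul]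
    rw [show (M:ℂ) * (((M:ℝ)⁻¹ : ℝ):ℂ) = 1 by push_cast; field_simp]
    rw [one_smul, sub_self]
  have htrF : ∀ α k, (F α k).trace = 0 := by
    intro α k
    rw [hFdef]
    simp only [Matrix.trace_sub, Matrix.trace_smul, Matrix.trace_one, htrE α k]
    rw [Fintype.card_fin, smul_eq_mul]
    push_cast
    field_simp
    ring
  have htrFF : ∀ α β k l, (F α k * F β l).trace
      = (E α k * E β l).trace - (d:ℂ)/(M:ℂ)^2 := by
    intro α β k l
    rw [hFdef]
    simp only [Matrix.sub_mul, Matrix.mul_sub, smul_mul_assoc, mul_smul_comm,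
      Matrix.one_mul, Matrix.mul_one, Matrix.trace_sub, Matrix.trace_smul, Matrix.trace_one,
      Fintype.card_fin, smul_eq_mul, smul_smul]
    rw [htrE α k, htrE β l]
    push_cast
    field_simp
    ring
  have hFFa : ∀ α k l, (F α k * F α l).trace
      = (if k = l then ((a:ℝ):ℂ) else ((-a/((M:ℝ)-1):ℝ):ℂ)) := by
    intro α k l
    rw [htrFF α α k l]
    rcases eq_or_ne k l with h | h
    · subst h
      rw [if_pos rfl, hx2 α k, ha_def]
      push_cast
      ring
    · rw [if_neg h, hoff α k l h]
      have hre : ((d:ℝ) - M*x)/((M:ℝ)*((M:ℝ)-1)) - (d:ℝ)/(M:ℝ)^2 = -a/((M:ℝ)-1) := by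
        rw [ha_def]; field_simp; ring
      rw [← hre]
      push_cast
      ring
  have hFG : ∀ α β k l, α ≠ β → (F α k * F β l).trace = 0 := by
    intro α β k l hne
    rw [htrFF α β k l, hdiff α β k l hne, sub_self]
  set T : Matrix (Fin d) (Fin d) ℂ := σ - (((d:ℝ)⁻¹ : ℝ):ℂ) • 1 with hTdef
  have hTh : T.IsHermitian := by
    show Tᴴ = T
    rw [hTdef]
    simp only [Matrix.conjTranspose_sub, Matrix.conjTranspose_smul, Matrix.conjTranspose_one,
      hσ.1.1.eq, Complex.star_def, Complex.conj_ofReal]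
  have hET : ∀ α k, (F α k * T).trace = (E α k * σ).trace - (((M:ℝ)⁻¹ : ℝ):ℂ) := by
    intro α k
    rw [hFdef, hTdef]
    simp only [Matrix.sub_mul, Matrix.mul_sub, smul_mul_assoc, mul_smul_comm,
      Matrix.one_mul, Matrix.mul_one, Matrix.trace_sub, Matrix.trace_smul, Matrix.trace_one,
      Fintype.card_fin, smul_eq_mul, smul_smul]
    rw [htrE α k, hσ.2]
    push_cast
    field_simp
    ring
  have hTT : (T * T).trace = (σ * σ).trace - (((d:ℝ)⁻¹ : ℝ):ℂ) := by
    rw [hTdef]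
    simp only [Matrix.sub_mul, Matrix.mul_sub, smul_mul_assoc, mul_smul_comm,
      Matrix.one_mul, Matrix.mul_one, Matrix.trace_sub, Matrix.trace_smul, Matrix.trace_one,
      Fintype.card_fin, smul_eq_mul, smul_smul]
    rw [hσ.2]
    push_cast
    field_simp
    ring
  set q : Fin N → Fin M → ℝ := fun α k => ((F α k * T).trace.re) with hq_def
  have hqsum : ∀ α, ∑ k, q α k = 0 := by
    intro α
    have h1 : ∑ k, (F α k * T).trace = 0 := by
      rw [← Matrix.trace_sum, ← Finset.sum_mul, hsumF α, Matrix.zero_mul, Matrix.trace_zero]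
    have h2 : ∀ (β : Fin N) (k : Fin M), (F β k * T).trace = ((q β k : ℝ):ℂ) := fun β k =>
      trace_mul_real (hFh β k) hTh
    simp only [h2] at h1
    exact_mod_cast h1
  have hre : ∀ α k, (E α k * σ).trace.re = q α k + (M:ℝ)⁻¹ := by
    intro α k
    have h := congrArg Complex.re (hET α k)
    rw [Complex.sub_re, Complex.ofReal_re] at h
    have h' : q α k = (E α k * σ).trace.re - (M:ℝ)⁻¹ := h
    linarith
  have hframe := frame_bound ha hM2 F hFh hsumF hFFa hFG T hTh
  have hpurity := purity_le_one hσ.1 hσ.2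
  have hTTre : (T*T).trace.re = (σ*σ).trace.re - (d:ℝ)⁻¹ := by
    rw [hTT, Complex.sub_re, Complex.ofReal_re]
  have hdim := dim_bound ha hM2 hd2 hc_def F hFh hsumF hFFa hFG htrF
  have hcpos : 0 < c := hc_def ▸ div_pos (mul_pos ha hM0) hM1
  have hQ : ∑ α, ∑ k, (q α k)^2 ≤ c * (1 - (d:ℝ)⁻¹) := by
    calc ∑ α, ∑ k, (q α k)^2 ≤ c * (T*T).trace.re := hframe
      _ = c * ((σ*σ).trace.re - (d:ℝ)⁻¹) := by rw [hTTre]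
      _ ≤ c * (1 - (d:ℝ)⁻¹) := by
          apply mul_le_mul_of_nonneg_left _ (le_of_lt hcpos)
          linarith
  have hLHS : ∑ α, ∑ k, ((E α k * σ).trace.re)^2
      = (∑ α, ∑ k, (q α k)^2) + (N:ℝ)/(M:ℝ) := by
    have hper : ∀ α, ∑ k, ((E α k * σ).trace.re)^2 = (∑ k, (q α k)^2) + (M:ℝ)⁻¹ := by
      intro α
      have hexp : ∀ k, ((E α k * σ).trace.re)^2
          = (q α k)^2 + 2*(M:ℝ)⁻¹ * q α k + ((M:ℝ)⁻¹)^2 := by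
        intro k; rw [hre α k]; ring
      rw [Finset.sum_congr rfl fun k _ => hexp k]
      rw [Finset.sum_add_distrib, Finset.sum_add_distrib, ← Finset.mul_sum, hqsum α, mul_zero,
        add_zero, Finset.sum_const, Finset.card_univ, Fintype.card_fin, nsmul_eq_mul]
      have hMM : (M:ℝ) * ((M:ℝ)⁻¹)^2 = (M:ℝ)⁻¹ := by field_simp
      rw [hMM]
    rw [Finset.sum_congr rfl fun α _ => hper α, Finset.sum_add_distrib, Finset.sum_const,
      Finset.card_univ, Fintype.card_fin, nsmul_eq_mul]
    rw [div_eq_mul_inv]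
  have hNM : (N:ℝ)/(M:ℝ) ≤ ((d:ℝ)^2 - 1)/((M:ℝ)*((M:ℝ)-1)) := by
    rw [div_le_div_iff₀ hM0 (mul_pos hM0 hM1)]
    calc (N:ℝ) * ((M:ℝ)*((M:ℝ)-1)) = ((N:ℝ)*((M:ℝ)-1)) * (M:ℝ) := by ring
      _ ≤ ((d:ℝ)^2-1) * (M:ℝ) := mul_le_mul_of_nonneg_right hdim (le_of_lt hM0)
  have hfinal : c * (1 - (d:ℝ)⁻¹) + ((d:ℝ)^2 - 1)/((M:ℝ)*((M:ℝ)-1))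
      = ((d:ℝ)-1) * ((d:ℝ)^2 + (M:ℝ)^2*x) / ((d:ℝ)*(M:ℝ)*((M:ℝ)-1)) := by
    rw [hc_def, ha_def]
    field_simp
    ring
  rw [hLHS]
  linarith [hQ, hNM]

lemma single_bound_nonneg {d N M : ℕ} {x : ℝ}
    (E : Fin N → Fin M → Matrix (Fin d) (Fin d) ℂ) (hE : IsNMPOVM d N M x E) :
    0 ≤ ((d:ℝ)-1) * ((d:ℝ)^2 + (M:ℝ)^2*x) / ((d:ℝ)*(M:ℝ)*((M:ℝ)-1)) := by
  obtain ⟨-, -, -, -, -, -, hlt, hle⟩ := hE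
  obtain ⟨hM2, hd2⟩ := povm_dims hlt hle
  have hx : 0 < x := by
    have h0 : 0 ≤ (d:ℝ)/(M:ℝ)^2 := by positivity
    linarith
  have h1 : 0 ≤ (d:ℝ) - 1 := by linarith
  have h2 : 0 ≤ (d:ℝ)^2 + (M:ℝ)^2*x := by positivity
  have h3 : 0 < (d:ℝ)*(M:ℝ)*((M:ℝ)-1) :=
    mul_pos (mul_pos (by linarith) (by linarith)) (by linarith)
  positivity


end POVMAux

/-- Separability criterion based on local `(N,M)` POVMs: sum-of-squared-probabilities form. -/
theorem sum_sq_joint_probabilities_le_of_separable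
    {dA dB NA MA NB MB : ℕ} {xA xB : ℝ}
    (EA : Fin NA → Fin MA → Matrix (Fin dA) (Fin dA) ℂ)
    (EB : Fin NB → Fin MB → Matrix (Fin dB) (Fin dB) ℂ)
    (hEA : IsNMPOVM dA NA MA xA EA) (hEB : IsNMPOVM dB NB MB xB EB)
    (ρ : Matrix (Fin dA × Fin dB) (Fin dA × Fin dB) ℂ)
    (hsep : Separable ρ) :
    ∑ α : Fin NA, ∑ k : Fin MA, ∑ β : Fin NB, ∑ j : Fin MB,
        (((EA α k ⊗ₖ EB β j) * ρ).trace.re) ^ 2 ≤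
      (((dA : ℝ) - 1) * ((dA : ℝ) ^ 2 + (MA : ℝ) ^ 2 * xA) /
          ((dA : ℝ) * (MA : ℝ) * ((MA : ℝ) - 1))) *
      (((dB : ℝ) - 1) * ((dB : ℝ) ^ 2 + (MB : ℝ) ^ 2 * xB) /
          ((dB : ℝ) * (MB : ℝ) * ((MB : ℝ) - 1))) := by
  obtain ⟨n, p, ρA, ρB, hp0, hp1, hACond, hBCond, hρ⟩ := hsep
  set CA : ℝ := ((dA : ℝ) - 1) * ((dA : ℝ) ^ 2 + (MA : ℝ) ^ 2 * xA) /
      ((dA : ℝ) * (MA : ℝ) * ((MA : ℝ) - 1)) with hCA_def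
  set CB : ℝ := ((dB : ℝ) - 1) * ((dB : ℝ) ^ 2 + (MB : ℝ) ^ 2 * xB) /
      ((dB : ℝ) * (MB : ℝ) * ((MB : ℝ) - 1)) with hCB_def
  have hCA0 : 0 ≤ CA := POVMAux.single_bound_nonneg EA hEA
  have hCB0 : 0 ≤ CB := POVMAux.single_bound_nonneg EB hEB
  set aR : Fin n → Fin NA → Fin MA → ℝ := fun i α k => ((EA α k * ρA i).trace.re) with haR
  set bR : Fin n → Fin NB → Fin MB → ℝ := fun i β j => ((EB β j * ρB i).trace.re) with hbR
  have key : ∀ α k β j, ((EA α k ⊗ₖ EB β j) * ρ).trace.re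
      = ∑ i, p i * aR i α k * bR i β j := by
    intro α k β j
    have hterm : ∀ i, ((EA α k ⊗ₖ EB β j) * ((p i : ℂ) • (ρA i ⊗ₖ ρB i))).trace
        = ((p i * aR i α k * bR i β j : ℝ) : ℂ) := by
      intro i
      rw [mul_smul_comm, Matrix.trace_smul, ← Matrix.mul_kronecker_mul,
        Matrix.trace_kronecker, smul_eq_mul]
      rw [POVMAux.trace_mul_real (hEA.1 α k).1 (hACond i).1.1,
        POVMAux.trace_mul_real (hEB.1 β j).1 (hBCond i).1.1]
      push_cast
      ring
    rw [hρ, Finset.mul_sum, Matrix.trace_sum,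
      Finset.sum_congr rfl fun i _ => hterm i, ← Complex.ofReal_sum, Complex.ofReal_re]
  have hCS : ∀ α k β j, (∑ i, p i * aR i α k * bR i β j)^2
      ≤ (∑ i, p i * (aR i α k)^2) * (∑ i, p i * (bR i β j)^2) := by
    intro α k β j
    have h := Finset.sum_mul_sq_le_sq_mul_sq Finset.univ
      (fun i => Real.sqrt (p i) * aR i α k) (fun i => Real.sqrt (p i) * bR i β j)
    have h1 : ∀ i : Fin n, (Real.sqrt (p i) * aR i α k) * (Real.sqrt (p i) * bR i β j)
        = p i * aR i α k * bR i β j := by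
      intro i
      have : Real.sqrt (p i) * Real.sqrt (p i) = p i := Real.mul_self_sqrt (hp0 i)
      calc (Real.sqrt (p i) * aR i α k) * (Real.sqrt (p i) * bR i β j)
          = (Real.sqrt (p i) * Real.sqrt (p i)) * aR i α k * bR i β j := by ring
        _ = p i * aR i α k * bR i β j := by rw [this]
    have h2 : ∀ i : Fin n, (Real.sqrt (p i) * aR i α k)^2 = p i * (aR i α k)^2 := by
      intro i
      rw [mul_pow, Real.sq_sqrt (hp0 i)]
    have h3 : ∀ i : Fin n, (Real.sqrt (p i) * bR i β j)^2 = p i * (bR i β j)^2 := by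
      intro i
      rw [mul_pow, Real.sq_sqrt (hp0 i)]
    rw [Finset.sum_congr rfl fun i _ => h1 i, Finset.sum_congr rfl fun i _ => h2 i,
      Finset.sum_congr rfl fun i _ => h3 i] at h
    exact h
  have sum_nonneg_b : ∀ β j, 0 ≤ ∑ i, p i * (bR i β j)^2 := fun β j =>
    Finset.sum_nonneg fun i _ => mul_nonneg (hp0 i) (sq_nonneg _)
  have hXA : ∑ α, ∑ k, ∑ i, p i * (aR i α k)^2 ≤ CA := by
    have hswap : ∑ α, ∑ k, ∑ i, p i * (aR i α k)^2
        = ∑ i, p i * (∑ α, ∑ k, (aR i α k)^2) := by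
      rw [Finset.sum_congr rfl fun (α : Fin NA) (_ : α ∈ Finset.univ) =>
        (Finset.sum_comm : ∑ k : Fin MA, ∑ i, p i * (aR i α k)^2
          = ∑ i, ∑ k : Fin MA, p i * (aR i α k)^2)]
      rw [Finset.sum_comm]
      refine Finset.sum_congr rfl fun i _ => ?_
      simp only [← Finset.mul_sum]
    rw [hswap]
    calc ∑ i, p i * (∑ α, ∑ k, (aR i α k)^2) ≤ ∑ i, p i * CA := by
          refine Finset.sum_le_sum fun i _ => ?_
          exact mul_le_mul_of_nonneg_left
            (POVMAux.single_party EA hEA (ρA i) (hACond i)) (hp0 i)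
      _ = CA := by rw [← Finset.sum_mul, hp1, one_mul]
  have hXB : ∑ β, ∑ j, ∑ i, p i * (bR i β j)^2 ≤ CB := by
    have hswap : ∑ β, ∑ j, ∑ i, p i * (bR i β j)^2
        = ∑ i, p i * (∑ β, ∑ j, (bR i β j)^2) := by
      rw [Finset.sum_congr rfl fun (β : Fin NB) (_ : β ∈ Finset.univ) =>
        (Finset.sum_comm : ∑ j : Fin MB, ∑ i, p i * (bR i β j)^2
          = ∑ i, ∑ j : Fin MB, p i * (bR i β j)^2)]
      rw [Finset.sum_comm]
      refine Finset.sum_congr rfl fun i _ => ?_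
      simp only [← Finset.mul_sum]
    rw [hswap]
    calc ∑ i, p i * (∑ β, ∑ j, (bR i β j)^2) ≤ ∑ i, p i * CB := by
          refine Finset.sum_le_sum fun i _ => ?_
          exact mul_le_mul_of_nonneg_left
            (POVMAux.single_party EB hEB (ρB i) (hBCond i)) (hp0 i)
      _ = CB := by rw [← Finset.sum_mul, hp1, one_mul]
  calc ∑ α : Fin NA, ∑ k : Fin MA, ∑ β : Fin NB, ∑ j : Fin MB,
        (((EA α k ⊗ₖ EB β j) * ρ).trace.re) ^ 2
      = ∑ α, ∑ k, ∑ β, ∑ j, (∑ i, p i * aR i α k * bR i β j)^2 := by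
        refine Finset.sum_congr rfl fun α _ => Finset.sum_congr rfl fun k _ =>
          Finset.sum_congr rfl fun β _ => Finset.sum_congr rfl fun j _ => ?_
        rw [key]
    _ ≤ ∑ α, ∑ k, ∑ β, ∑ j, (∑ i, p i * (aR i α k)^2) * (∑ i, p i * (bR i β j)^2) := by
        refine Finset.sum_le_sum fun α _ => Finset.sum_le_sum fun k _ =>
          Finset.sum_le_sum fun β _ => Finset.sum_le_sum fun j _ => ?_
        exact hCS α k β j
    _ = (∑ α, ∑ k, ∑ i, p i * (aR i α k)^2) * (∑ β, ∑ j, ∑ i, p i * (bR i β j)^2) := by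
        rw [Finset.sum_mul]
        refine Finset.sum_congr rfl fun α _ => ?_
        rw [Finset.sum_mul]
        refine Finset.sum_congr rfl fun k _ => ?_
        simp only [← Finset.mul_sum]
    _ ≤ CA * CB := by
        apply mul_le_mul hXA hXB _ hCA0
        exact Finset.sum_nonneg fun β _ => Finset.sum_nonneg fun j _ => sum_nonneg_b β j
end
end
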